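/- arXiv:1809.08690 — 11 statements merged into one kernel-verified Lean document; each statement's English description precedes it below -/
import Mathlib

section
/- Let α ∈ (0,1) be irrational and k = ⌊1/α⌋. For any positive integer m: both m ∈ B_α and m + k ∈ B_α hold if and only if {1/α}·α < {(m+1)α} < α; and both m ∈ B_α and m + k + 1 ∈ B_α (with m + k ∉ B_α) hold if and only if {(m+1)α} < {1/α}·α. -/
open scoped Classical

def beatty (α : ℝ) : Set ℤ := {m | ∃ n : ℕ, 0 < n ∧ m = ⌊(n : ℝ) / α⌋}

noncomputable def countLe (S : Set ℤ) (m : ℤ) : ℕ :=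
  ((Finset.Icc 1 m).filter (fun k => k ∈ S)).card

/-! A positive integer `n` has `⌊n / α⌋ = j` iff `j α ≤ n < (j + 1) α`, so for irrational `α` and
`j ≥ 0` we get `j ∈ B_α` iff `{(j + 1) α} < α`. Since `k α = 1 - c` with `c = {1/α} α ∈ (0, α)`,
passing from `m` to `m + k` (resp. `m + k + 1`) shifts `x = {(m + 1) α}` by `-c` (resp. `α - c`)
modulo `1`; comparing `x` with `c` then decides membership, and `x = c` would make `(m + k + 1) α`
an integer. -/

namespace Int

variable {R : Type*} [CommRing R] [LinearOrder R] [IsStrictOrderedRing R] [FloorRing R] {a b : R}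

theorem fract_add_of_fract_add_lt_one (hb : 0 ≤ b) (h : fract a + b < 1) :
    fract (a + b) = fract a + b :=
  fract_eq_iff.mpr ⟨by linarith [fract_nonneg a], h, ⌊a⌋, by rw [fract]; ring⟩

theorem fract_add_of_one_le_fract_add (hb : b < 1) (h : 1 ≤ fract a + b) :
    fract (a + b) = fract a + b - 1 :=
  fract_eq_iff.mpr ⟨by linarith, by linarith [fract_lt_one a], ⌊a⌋ + 1,
    by push_cast; rw [fract]; ring⟩

theorem fract_one_div_mul_self {K : Type*} [Field K] [LinearOrder K] [IsStrictOrderedRing K]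
    [FloorRing K] {a : K} (ha : a ≠ 0) : fract (1 / a) * a = 1 - ⌊1 / a⌋ * a := by
  rw [fract, sub_mul, one_div_mul_cancel ha]

end Int

section Beatty

variable {α : ℝ}

theorem mem_beatty_iff_exists_nat (h0 : 0 < α) (j : ℤ) :
    j ∈ beatty α ↔ ∃ n : ℕ, 0 < n ∧ j * α ≤ n ∧ n < (j + 1) * α := by
  refine exists_congr fun n => and_congr_right fun _ => ?_
  rw [eq_comm, Int.floor_eq_iff, le_div_iff₀ h0, div_lt_iff₀ h0]

theorem mem_beatty_iff_fract_lt (hirr : Irrational α) (h0 : 0 < α) {j : ℤ} (hj : 0 ≤ j) :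
    j ∈ beatty α ↔ Int.fract ((j + 1) * α) < α := by
  set F := ⌊((j : ℝ) + 1) * α⌋
  have hF : (F : ℝ) < (j + 1) * α := (Int.floor_le _).lt_of_ne <| by
    simpa [eq_comm] using (hirr.intCast_mul (by omega : j + 1 ≠ 0)).ne_int F
  have hfract : Int.fract ((j + 1) * α) < α ↔ j * α < F := by
    rw [Int.fract]; constructor <;> intro <;> linarith
  rw [hfract, mem_beatty_iff_exists_nat h0]
  constructor
  · rintro ⟨n, hn, hjn, hnj⟩
    have hnF : (n : ℝ) ≤ F := by exact_mod_cast Int.le_floor.mpr (by exact_mod_cast hnj.le)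
    have hjn' : (j : ℝ) * α < n := by
      rcases hj.eq_or_lt with rfl | hj
      · simpa using hn
      · exact hjn.lt_of_ne (by simpa using (hirr.intCast_mul hj.ne').ne_int n)
    linarith
  · intro hjF
    have hF0 : 0 < F := by exact_mod_cast (mul_nonneg (by exact_mod_cast hj) h0.le).trans_lt hjF
    lift F to ℕ using hF0.le with n hn
    exact ⟨n, by exact_mod_cast hF0, by exact_mod_cast hjF.le, by exact_mod_cast hF⟩

section GapShift

variable {k : ℕ} (hk : (k : ℤ) = ⌊1 / α⌋)
include hk

theorem natCast_mul_eq_one_sub_fract_one_div_mul (h0 : α ≠ 0) :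
    (k : ℝ) * α = 1 - Int.fract (1 / α) * α := by
  rw [Int.fract_one_div_mul_self h0, ← hk, Int.cast_natCast]; ring

variable (hirr : Irrational α) (h0 : 0 < α) (m : ℕ)
include hirr h0

theorem add_floor_one_div_mem_beatty_iff :
    (m : ℤ) + k ∈ beatty α ↔
      Int.fract ((m + 1) * α + (1 - Int.fract (1 / α) * α)) < α := by
  rw [mem_beatty_iff_fract_lt hirr h0 (by positivity)]
  congr! 2
  push_cast
  linear_combination natCast_mul_eq_one_sub_fract_one_div_mul hk h0.ne'

theorem add_floor_one_div_add_one_mem_beatty_iff :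
    (m : ℤ) + k + 1 ∈ beatty α ↔
      Int.fract ((m + 1) * α + (α - Int.fract (1 / α) * α)) < α := by
  rw [mem_beatty_iff_fract_lt hirr h0 (by positivity), ← Int.fract_add_one (_ + _)]
  congr! 2
  push_cast
  linear_combination natCast_mul_eq_one_sub_fract_one_div_mul hk h0.ne'

end GapShift

end Beatty

theorem beatty_gap_criterion_general (α : ℝ) (hirr : Irrational α) (h0 : 0 < α) (h1 : α < 1)
    (k : ℕ) (hk : (k : ℤ) = ⌊1 / α⌋) (m : ℕ) :
    (((m : ℤ) ∈ beatty α ∧ ((m : ℤ) + k) ∈ beatty α) ↔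
      (Int.fract (1 / α) * α < Int.fract (((m : ℝ) + 1) * α) ∧
        Int.fract (((m : ℝ) + 1) * α) < α)) ∧
    (((m : ℤ) ∈ beatty α ∧ ((m : ℤ) + k + 1) ∈ beatty α ∧ ((m : ℤ) + k) ∉ beatty α) ↔
      Int.fract (((m : ℝ) + 1) * α) < Int.fract (1 / α) * α) := by
  have hm : (m : ℤ) ∈ beatty α ↔ Int.fract (((m : ℝ) + 1) * α) < α := by
    simpa using mem_beatty_iff_fract_lt hirr h0 (Int.natCast_nonneg m)
  rw [hm, add_floor_one_div_mem_beatty_iff hk hirr h0,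
    add_floor_one_div_add_one_mem_beatty_iff hk hirr h0]
  have hkc := natCast_mul_eq_one_sub_fract_one_div_mul hk h0.ne'
  set t := ((m : ℝ) + 1) * α
  set c := Int.fract (1 / α) * α
  have hc0 : 0 < c :=
    mul_pos (Int.fract_pos.mpr (by simpa using hirr.inv.ne_int ⌊α⁻¹⌋)) h0
  have hcα : c < α := mul_lt_of_lt_one_left h0 (Int.fract_lt_one _)
  have hx0 : 0 ≤ Int.fract t := Int.fract_nonneg t
  rcases lt_trichotomy (Int.fract t) c with hlt | heq | hgt
  · have hk1 : (1 : ℝ) ≤ k := by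
      have : (1 : ℤ) ≤ k := hk ▸ Int.le_floor.mpr (by simpa using one_le_one_div h0 h1.le)
      exact_mod_cast this
    have hαc : α ≤ 1 - c := hkc ▸ le_mul_of_one_le_left h0.le hk1
    rw [Int.fract_add_of_fract_add_lt_one (by linarith) (by linarith),
      Int.fract_add_of_fract_add_lt_one (b := α - c) (by linarith) (by linarith)]
    exact ⟨iff_of_false (fun h => by linarith [h.2]) (fun h => by linarith [h.1]),
      iff_of_true ⟨by linarith, by linarith, not_lt.mpr (by linarith)⟩ hlt⟩
  · have hmul_eq_int : ((m + k + 1 : ℕ) : ℝ) * α = (⌊t⌋ + 1 : ℤ) := by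
      push_cast; linear_combination hkc - Int.floor_add_fract t + heq
    exact absurd hmul_eq_int ((hirr.natCast_mul (by omega)).ne_int _)
  · rw [Int.fract_add_of_one_le_fract_add (by linarith) (by linarith)]
    exact ⟨⟨fun h => ⟨hgt, h.1⟩, fun h => ⟨h.2, by linarith [h.2]⟩⟩,
      iff_of_false (fun h => h.2.2 (by linarith [h.1])) hgt.not_gt⟩

theorem beatty_gap_criterion (α : ℝ) (hirr : Irrational α) (h0 : 0 < α) (h1 : α < 1)
    (k : ℕ) (hk : (k : ℤ) = ⌊1 / α⌋) (m : ℕ) (hm : 0 < m) :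
    (((m : ℤ) ∈ beatty α ∧ ((m : ℤ) + k) ∈ beatty α) ↔
      (Int.fract (1 / α) * α < Int.fract (((m : ℝ) + 1) * α) ∧
        Int.fract (((m : ℝ) + 1) * α) < α)) ∧
    (((m : ℤ) ∈ beatty α ∧ ((m : ℤ) + k + 1) ∈ beatty α ∧ ((m : ℤ) + k) ∉ beatty α) ↔
      Int.fract (((m : ℝ) + 1) * α) < Int.fract (1 / α) * α) :=
  beatty_gap_criterion_general α hirr h0 h1 k hk m
end

section
/- Let α, β, γ be positive irrational numbers with α + β + γ = 1. Set u_m = {(m+1)α} and v_m = {(m+1)β}. Then for every positive integer m, B_α(m) + B_β(m) + B_γ(m) = m - δ(u_m, v_m), where δ(s,t) = 1 if s + t ≥ 1 and 0 otherwise. -/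
/-!
For `0 < α ≤ 1` the map `n ↦ ⌊n / α⌋` is strictly increasing, and `⌊n / α⌋ ≤ m` exactly when
`n < (m + 1) α`; hence `B_α(m) = ⌈(m + 1) α⌉ - 1`, which is `⌊(m + 1) α⌋` for irrational `α`.
With `x, y, z = (m + 1) α, (m + 1) β, (m + 1) γ` we have `x + y + z = m + 1`, so
`⌊x + y⌋ = m + 1 - ⌈z⌉ = m - ⌊z⌋` as `z` is irrational, while `⌊x⌋ + ⌊y⌋` falls short of
`⌊x + y⌋` by one exactly when the fractional parts of `x` and `y` add up to at least one.
-/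

open scoped Classical

open Finset

section FloorRing

variable {R : Type*} [CommRing R] [LinearOrder R] [IsStrictOrderedRing R] [FloorRing R]

lemma Int.floor_add_floor (x y : R) :
    ⌊x⌋ + ⌊y⌋ = ⌊x + y⌋ - if 1 ≤ Int.fract x + Int.fract y then 1 else 0 := by
  have hsplit : x + y = ((⌊x⌋ + ⌊y⌋ : ℤ) : R) + (Int.fract x + Int.fract y) := by
    push_cast [Int.fract]; ring
  have hfract :
      ⌊Int.fract x + Int.fract y⌋ = if 1 ≤ Int.fract x + Int.fract y then 1 else 0 := by
    have := Int.fract_lt_one x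
    have := Int.fract_lt_one y
    split_ifs with h
    · exact Int.floor_eq_iff.2 ⟨by push_cast; exact h, by push_cast; linarith⟩
    · have := Int.fract_nonneg x
      have := Int.fract_nonneg y
      exact Int.floor_eq_iff.2 ⟨by push_cast; linarith, by push_cast; linarith⟩
  rw [hsplit, Int.floor_intCast_add, hfract]
  ring

lemma Int.floor_add_floor_add_floor_of_add_eq_int {x y z : R} {N : ℤ}
    (hz : z ∉ Set.range Int.cast) (h : x + y + z = N) :
    ⌊x⌋ + ⌊y⌋ + ⌊z⌋ = N - 1 - if 1 ≤ Int.fract x + Int.fract y then 1 else 0 := by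
  have hxy : x + y = N + -z := by rw [← h]; ring
  rw [Int.floor_add_floor, hxy, Int.floor_intCast_add, Int.floor_neg,
    (Int.ceil_eq_floor_add_one_iff_notMem z).2 hz]
  ring

end FloorRing

lemma Irrational.notMem_range_intCast {x : ℝ} (hx : Irrational x) : x ∉ Set.range Int.cast := by
  rintro ⟨n, rfl⟩
  exact hx.ne_int n rfl

lemma Irrational.natCast_add_one_mul {x : ℝ} (hx : Irrational x) (m : ℕ) :
    Irrational (((m : ℝ) + 1) * x) := by
  exact_mod_cast hx.natCast_mul m.succ_ne_zero

section Beatty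

variable {α : ℝ}

lemma strictMono_floor_intCast_div (h0 : 0 < α) (h1 : α ≤ 1) :
    StrictMono fun n : ℤ => ⌊(n : ℝ) / α⌋ := by
  refine strictMono_int_of_lt_succ fun n => ?_
  have hstep : (n : ℝ) / α + 1 ≤ ((n + 1 : ℤ) : ℝ) / α := by
    rw [Int.cast_add, Int.cast_one, add_div]
    gcongr
    exact one_le_one_div h0 h1
  calc ⌊(n : ℝ) / α⌋ < ⌊(n : ℝ) / α⌋ + 1 := lt_add_one _
    _ = ⌊(n : ℝ) / α + 1⌋ := (Int.floor_add_one _).symm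
    _ ≤ ⌊((n + 1 : ℤ) : ℝ) / α⌋ := Int.floor_mono hstep

lemma floor_intCast_div_le_iff (h0 : 0 < α) (n m : ℤ) :
    ⌊(n : ℝ) / α⌋ ≤ m ↔ n < ⌈((m : ℝ) + 1) * α⌉ := by
  rw [Int.floor_le_iff, div_lt_iff₀ h0, Int.lt_ceil]

lemma one_le_floor_intCast_div (h0 : 0 < α) (h1 : α ≤ 1) {n : ℤ} (hn : 1 ≤ n) :
    1 ≤ ⌊(n : ℝ) / α⌋ := by
  rw [Int.le_floor, Int.cast_one, one_le_div h0]
  exact h1.trans (by exact_mod_cast hn)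

lemma filter_mem_beatty_Icc (h0 : 0 < α) (h1 : α ≤ 1) (m : ℤ) :
    (Icc 1 m).filter (· ∈ beatty α) =
      (Ioo 0 ⌈((m : ℝ) + 1) * α⌉).image fun n : ℤ => ⌊(n : ℝ) / α⌋ := by
  ext k
  simp only [mem_filter, mem_Icc, mem_image, mem_Ioo]
  constructor
  · rintro ⟨⟨-, hkm⟩, n, hn, rfl⟩
    exact ⟨n, ⟨by exact_mod_cast hn, (floor_intCast_div_le_iff h0 _ _).1 hkm⟩, rfl⟩
  · rintro ⟨n, ⟨hn, hnm⟩, rfl⟩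
    refine ⟨⟨one_le_floor_intCast_div h0 h1 hn, (floor_intCast_div_le_iff h0 _ _).2 hnm⟩,
      n.toNat, by omega, ?_⟩
    rw [← Int.cast_natCast, Int.toNat_of_nonneg hn.le]

lemma countLe_beatty_eq_ceil (h0 : 0 < α) (h1 : α ≤ 1) (m : ℕ) :
    (countLe (beatty α) m : ℤ) = ⌈((m : ℝ) + 1) * α⌉ - 1 := by
  have hpos : 0 < ⌈((m : ℝ) + 1) * α⌉ := Int.ceil_pos.2 (by positivity)
  rw [countLe, filter_mem_beatty_Icc h0 h1, Int.cast_natCast,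
    card_image_of_injective _ (strictMono_floor_intCast_div h0 h1).injective,
    Int.card_Ioo_of_lt _ _ hpos, sub_zero]

lemma Irrational.countLe_beatty_eq_floor (hα : Irrational α) (h0 : 0 < α) (h1 : α ≤ 1)
    (m : ℕ) : (countLe (beatty α) m : ℤ) = ⌊((m : ℝ) + 1) * α⌋ := by
  rw [countLe_beatty_eq_ceil h0 h1, (Int.ceil_eq_floor_add_one_iff_notMem _).2
    (hα.natCast_add_one_mul m).notMem_range_intCast, add_sub_cancel_right]

end Beatty

theorem counting_identity_general (α β γ : ℝ)
    (hirra : Irrational α) (hirrb : Irrational β) (hirrc : Irrational γ)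
    (ha : 0 < α) (hb : 0 < β) (hc : 0 < γ) (hsum : α + β + γ = 1)
    (m : ℕ) :
    (countLe (beatty α) (m : ℤ) : ℤ) + countLe (beatty β) (m : ℤ) + countLe (beatty γ) (m : ℤ) =
      (m : ℤ) - (if 1 ≤ Int.fract (((m : ℝ) + 1) * α) + Int.fract (((m : ℝ) + 1) * β)
        then 1 else 0) := by
  rw [hirra.countLe_beatty_eq_floor ha (by linarith),
    hirrb.countLe_beatty_eq_floor hb (by linarith),
    hirrc.countLe_beatty_eq_floor hc (by linarith),
    Int.floor_add_floor_add_floor_of_add_eq_int (N := m + 1)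
      (hirrc.natCast_add_one_mul m).notMem_range_intCast]
  · ring
  · push_cast
    linear_combination ((m : ℝ) + 1) * hsum

theorem counting_identity (α β γ : ℝ)
    (hirra : Irrational α) (hirrb : Irrational β) (hirrc : Irrational γ)
    (ha : 0 < α) (hb : 0 < β) (hc : 0 < γ) (hsum : α + β + γ = 1)
    (m : ℕ) (hm : 0 < m) :
    (countLe (beatty α) (m : ℤ) : ℤ) + countLe (beatty β) (m : ℤ) + countLe (beatty γ) (m : ℤ) =
      (m : ℤ) - (if 1 ≤ Int.fract (((m : ℝ) + 1) * α) + Int.fract (((m : ℝ) + 1) * β)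
        then 1 else 0) :=
  counting_identity_general α β γ hirra hirrb hirrc ha hb hc hsum m
end

section
/- Let α, β be irrational numbers in (0,1). The Beatty sequences B_α and B_β are disjoint if and only if there exist positive integers r and s with rα + sβ = 1. -/
/-!
If `m ∈ B_α ∩ B_β`, say `m α < n₁ < (m + 1) α` and `m β < n₂ < (m + 1) β`, then `r α + s β = 1`
traps the integer `r n₁ + s n₂` strictly between `m` and `m + 1`.

Conversely, `B_α` and `B_β` share an element exactly when the subgroup `L = ℤ (α, β) + ℤ²` of `ℝ²`
meets the open box `(0, α) × (0, β)`, so for disjoint sequences the closure `C` of `L` misses the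
box. Since `α` is irrational, `L` has nonzero elements of arbitrarily small norm, so `C` contains a
line; a closed subgroup of `ℝ²` containing `ℤ²` and a line is `{x | a x₁ + b x₂ ∈ ℤ}` for some
integers `a`, `b`. Such a set misses the box only if `a, b > 0` and `a α + b β = 1`.
-/

open scoped Classical

open Filter Topology Set

theorem tendsto_floor_div_mul {ι : Type*} {l : Filter ι} {r : ι → ℝ} (hr0 : ∀ i, 0 < r i)
    (hr : Tendsto r l (𝓝 0)) (t : ℝ) : Tendsto (fun i => (⌊t / r i⌋ : ℝ) * r i) l (𝓝 t) := by
  refine tendsto_of_tendsto_of_tendsto_of_le_of_le (g := fun i => t - r i)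
    (by simpa using tendsto_const_nhds.sub hr) tendsto_const_nhds (fun i => ?_) (fun i => ?_)
  · have := Int.lt_floor_add_one (t / r i)
    rw [div_lt_iff₀ (hr0 i)] at this
    dsimp only
    linarith
  · exact (le_div_iff₀ (hr0 i)).1 (Int.floor_le _)

theorem AddSubgroup.exists_seq_tendsto_zero_of_injective {E : Type*} [AddGroup E]
    [TopologicalSpace E] [IsTopologicalAddGroup E] [FirstCountableTopology E]
    {S : AddSubgroup E} {K : Set E} (hK : IsCompact K) {w : ℕ → E} (hw : Function.Injective w)
    (hwS : ∀ n, w n ∈ S) (hwK : ∀ n, w n ∈ K) :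
    ∃ v : ℕ → E, (∀ k, v k ∈ S) ∧ (∀ k, v k ≠ 0) ∧ Tendsto v atTop (𝓝 0) := by
  obtain ⟨l, -, φ, hφ, hlim⟩ := hK.tendsto_subseq hwK
  refine ⟨fun k => w (φ (k + 1)) - w (φ k), fun k => S.sub_mem (hwS _) (hwS _),
    fun k => sub_ne_zero.2 (hw.ne (hφ k.lt_succ_self).ne'), ?_⟩
  simpa using (hlim.comp (tendsto_add_atTop_nat 1)).sub hlim

theorem AddSubgroup.exists_ne_zero_forall_smul_mem_topologicalClosure {E : Type*}
    [NormedAddCommGroup E] [NormedSpace ℝ E] [ProperSpace E] {S : AddSubgroup E} {v : ℕ → E}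
    (hvS : ∀ k, v k ∈ S) (hv0 : ∀ k, v k ≠ 0) (hv : Tendsto v atTop (𝓝 0)) :
    ∃ u : E, u ≠ 0 ∧ ∀ t : ℝ, t • u ∈ S.topologicalClosure := by
  have hsphere : ∀ k, ‖v k‖⁻¹ • v k ∈ Metric.sphere (0 : E) 1 := fun k => by
    simp [norm_smul, hv0 k]
  obtain ⟨u, hu, φ, hφ, hlim⟩ := (isCompact_sphere (0 : E) 1).tendsto_subseq hsphere
  refine ⟨u, by rintro rfl; simp at hu, fun t => ?_⟩
  have hpos : ∀ k, 0 < ‖v (φ k)‖ := fun k => norm_pos_iff.2 (hv0 _)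
  have hnorm : Tendsto (fun k => ‖v (φ k)‖) atTop (𝓝 0) := by
    simpa using (hv.comp hφ.tendsto_atTop).norm
  -- `t u` is the limit of the multiples `⌊t / ‖v‖⌋ • v` of the small vectors `v = v (φ k)`
  refine S.isClosed_topologicalClosure.mem_of_tendsto
    ((tendsto_floor_div_mul hpos hnorm t).smul hlim) (Eventually.of_forall fun k => ?_)
  have : ((⌊t / ‖v (φ k)‖⌋ : ℝ) * ‖v (φ k)‖) • (‖v (φ k)‖⁻¹ • v (φ k)) =
      ⌊t / ‖v (φ k)‖⌋ • v (φ k) := by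
    rw [smul_smul, mul_assoc, mul_inv_cancel₀ (hpos k).ne', mul_one, Int.cast_smul_eq_zsmul]
  simp only [Function.comp_apply, this]
  exact S.le_topologicalClosure (S.zsmul_mem (hvS _) _)

theorem Prod.sq_add_sq_ne_zero {u : ℝ × ℝ} (hu : u ≠ 0) : u.1 ^ 2 + u.2 ^ 2 ≠ 0 := by
  contrapose! hu
  obtain ⟨h₁, h₂⟩ := (add_eq_zero_iff_of_nonneg (sq_nonneg _) (sq_nonneg _)).1 hu
  exact Prod.ext (pow_eq_zero_iff two_ne_zero |>.1 h₁) (pow_eq_zero_iff two_ne_zero |>.1 h₂)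

theorem Prod.exists_smul_eq_of_mul_sub_mul_eq_zero {u x : ℝ × ℝ} (hu : u ≠ 0)
    (hx : u.2 * x.1 - u.1 * x.2 = 0) : ∃ t : ℝ, t • u = x := by
  have hD := Prod.sq_add_sq_ne_zero hu
  refine ⟨(u.1 * x.1 + u.2 * x.2) / (u.1 ^ 2 + u.2 ^ 2), ?_⟩
  ext <;> simp only [Prod.smul_fst, Prod.smul_snd, smul_eq_mul] <;> field_simp
  · linear_combination (-u.2) * hx
  · linear_combination u.1 * hx

theorem AddSubgroup.exists_int_forall_mem_iff_of_isClosed {C : AddSubgroup (ℝ × ℝ)}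
    (hC : IsClosed (C : Set (ℝ × ℝ))) (h₁ : ((1 : ℝ), (0 : ℝ)) ∈ C) (h₂ : ((0 : ℝ), (1 : ℝ)) ∈ C)
    {u : ℝ × ℝ} (hu : u ≠ 0) (hline : ∀ t : ℝ, t • u ∈ C) :
    ∃ a b : ℤ, ∀ x : ℝ × ℝ, x ∈ C ↔ ∃ n : ℤ, a * x.1 + b * x.2 = n := by
  set π : ℝ × ℝ →L[ℝ] ℝ :=
    u.2 • ContinuousLinearMap.fst ℝ ℝ ℝ - u.1 • ContinuousLinearMap.snd ℝ ℝ ℝ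
  have hπ : ∀ x, π x = u.2 * x.1 - u.1 * x.2 := fun x => rfl
  have hker : (π : ℝ × ℝ →+ ℝ).ker ≤ C := fun x hx => by
    obtain ⟨t, rfl⟩ := Prod.exists_smul_eq_of_mul_sub_mul_eq_zero hu hx
    exact hline t
  have hmem : ∀ x, x ∈ C ↔ π x ∈ C.map (π : ℝ × ℝ →+ ℝ) := fun x =>
    (SetLike.ext_iff.1 (AddSubgroup.comap_map_eq_self hker) x).symm
  rcases (C.map (π : ℝ × ℝ →+ ℝ)).dense_or_cyclic with hd | ⟨g, hg⟩
  · have hsurj : Function.Surjective π := fun y => by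
      have hD : u.1 ^ 2 + u.2 ^ 2 ≠ 0 := Prod.sq_add_sq_ne_zero hu
      exact ⟨(y * u.2 / (u.1 ^ 2 + u.2 ^ 2), -y * u.1 / (u.1 ^ 2 + u.2 ^ 2)), by
        rw [hπ]; field_simp; ring⟩
    have hdense : Dense (C : Set (ℝ × ℝ)) :=
      (hd.preimage (π.isOpenMap hsurj)).mono fun x hx => (hmem x).2 hx
    refine ⟨0, 0, fun x => iff_of_true ?_ ⟨0, by simp⟩⟩
    rw [← SetLike.mem_coe, ← hC.closure_eq, hdense.closure_eq]
    exact mem_univ x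
  · obtain ⟨a, ha⟩ := AddSubgroup.mem_closure_singleton.1 (hg ▸ (hmem _).1 h₁)
    obtain ⟨b, hb⟩ := AddSubgroup.mem_closure_singleton.1 (hg ▸ (hmem _).1 h₂)
    rw [zsmul_eq_mul] at ha hb
    have ha' : (a : ℝ) * g = u.2 := by simpa [hπ] using ha
    have hb' : (b : ℝ) * g = -u.1 := by simpa [hπ] using hb
    have hg0 : g ≠ 0 := by
      rintro rfl
      exact hu (Prod.ext (by simpa using hb'.symm) (by simpa using ha'.symm))
    refine ⟨a, b, fun x => ?_⟩
    rw [hmem, hg, AddSubgroup.mem_closure_singleton]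
    refine exists_congr fun n => ?_
    have key : π x = (a * x.1 + b * x.2) * g := by
      rw [hπ]; linear_combination (-x.1) * ha' - x.2 * hb'
    rw [zsmul_eq_mul, key, mul_left_inj' hg0, eq_comm]

theorem Irrational.injective_fract_natCast_mul {α : ℝ} (hα : Irrational α) :
    Function.Injective fun n : ℕ => Int.fract (n * α) := fun n n' h => by
  obtain ⟨z, hz⟩ := Int.fract_eq_fract.1 h
  by_contra hne
  have : (n - n' : ℤ) ≠ 0 := by omega
  exact (hα.intCast_mul this).ne_int z (by push_cast; linarith)

theorem exists_mem_Ioo_mul_add_one_sub_mul_eq_zero {p q : ℝ} (h : p * q < 0) :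
    ∃ t ∈ Ioo (0 : ℝ) 1, t * p + (1 - t) * q = 0 := by
  have hqp : q - p ≠ 0 := fun h' => by
    rw [sub_eq_zero.1 h'] at h
    exact (mul_self_nonneg p).not_gt h
  refine ⟨q / (q - p), ?_, by field_simp; ring⟩
  rcases lt_or_gt_of_ne hqp with hlt | hgt
  · have hq : q < 0 := by nlinarith
    exact ⟨div_pos_of_neg_of_neg hq hlt, (div_lt_one_of_neg hlt).2 (by nlinarith)⟩
  · have hq : 0 < q := by nlinarith
    exact ⟨div_pos hq hgt, (div_lt_one hgt).2 (by nlinarith)⟩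

theorem pos_of_mul_nonneg_of_add_eq_one {γ δ : ℝ} (hδ : Irrational δ) (hγ0 : 0 < γ)
    (hδ0 : 0 < δ) {c d : ℤ} (hcd : 0 ≤ c * d) (h : c * γ + d * δ = 1) : 0 < c := by
  rcases lt_trichotomy c 0 with hc | rfl | hc
  · have hd : (d : ℝ) ≤ 0 := by exact_mod_cast (by nlinarith : d ≤ 0)
    have hc' : (c : ℝ) < 0 := by exact_mod_cast hc
    nlinarith
  · rcases eq_or_ne d 0 with rfl | hd
    · simp at h
    · exact absurd (by simpa using h) ((hδ.intCast_mul hd).ne_one)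
  · exact hc

theorem mul_nonneg_of_forall_mem_box_ne {α β : ℝ} (hα0 : 0 < α) (hβ0 : 0 < β) {a b : ℤ}
    (hbox : ∀ x ∈ Ioo 0 α ×ˢ Ioo 0 β, a * x.1 + b * x.2 ≠ (0 : ℤ)) : 0 ≤ a * b := by
  by_contra! h
  have h' : (a * α) * (b * β) < 0 := by
    have : ((a * b : ℤ) : ℝ) < 0 := by exact_mod_cast h
    push_cast at this
    nlinarith [mul_pos hα0 hβ0]
  obtain ⟨t, ⟨ht₀, ht₁⟩, hzero⟩ := exists_mem_Ioo_mul_add_one_sub_mul_eq_zero h'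
  refine hbox (t * α, (1 - t) * β) ⟨⟨by positivity, by nlinarith⟩, by nlinarith, by nlinarith⟩ ?_
  rw [Int.cast_zero, ← hzero]
  ring

theorem exists_nat_add_eq_one_of_forall_mem_box_ne {α β : ℝ} (hα : Irrational α)
    (hβ : Irrational β) (hα0 : 0 < α) (hβ0 : 0 < β) {a b k : ℤ} (hk : a * α + b * β = k)
    (hbox : ∀ x ∈ Ioo 0 α ×ˢ Ioo 0 β, ∀ n : ℤ, a * x.1 + b * x.2 ≠ n) :
    ∃ r s : ℕ, 0 < r ∧ 0 < s ∧ r * α + s * β = 1 := by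
  have hdiag : ∀ t ∈ Ioo (0 : ℝ) 1, ∀ n : ℤ, t * k ≠ n := fun t ⟨ht₀, ht₁⟩ n => by
    have := hbox (t * α, t * β) ⟨⟨by positivity, by nlinarith⟩, by positivity, by nlinarith⟩ n
    rwa [← hk, show t * (a * α + b * β) = a * (t * α) + b * (t * β) by ring]
  have hab : 0 ≤ a * b := mul_nonneg_of_forall_mem_box_ne hα0 hβ0 fun x hx => hbox x hx 0
  wlog hk0 : 0 ≤ k generalizing a b k
  · refine this (a := -a) (b := -b) (k := -k) (by push_cast; linarith)
      (fun x hx n h => hbox x hx (-n) ?_) (fun t ht n h => hdiag t ht (-n) ?_) (by simpa using hab)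
      (by omega) <;> push_cast at h ⊢ <;> linarith
  have hk1 : k = 1 := by
    rcases lt_trichotomy k 1 with h | h | h
    · exact absurd (show ((1 / 2 : ℝ) * k) = (0 : ℤ) by rw [show k = 0 by omega]; simp)
        (hdiag _ ⟨by norm_num, by norm_num⟩ 0)
    · exact h
    · have hk' : (1 : ℝ) < k := by exact_mod_cast h
      exact absurd (show (1 / (k : ℝ)) * k = (1 : ℤ) by field_simp; simp)
        (hdiag _ ⟨by positivity, (div_lt_one (by linarith)).2 hk'⟩ 1)
  subst hk1
  have ha := pos_of_mul_nonneg_of_add_eq_one hβ hα0 hβ0 hab (by simpa using hk)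
  have hb := pos_of_mul_nonneg_of_add_eq_one hα hβ0 hα0 (by rwa [mul_comm])
    (by simpa [add_comm] using hk)
  lift a to ℕ using ha.le
  lift b to ℕ using hb.le
  exact ⟨a, b, by exact_mod_cast ha, by exact_mod_cast hb, by simpa using hk⟩

theorem mem_beatty_of_lt_of_lt {α : ℝ} (hα : 0 < α) {m a : ℤ} (hm : 0 ≤ m)
    (h₁ : m * α < a) (h₂ : a < (m + 1) * α) : m ∈ beatty α := by
  have ha : (0 : ℝ) < a := (mul_nonneg (Int.cast_nonneg_iff.mpr hm) hα.le).trans_lt h₁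
  lift a to ℕ using (Int.cast_pos.1 ha).le
  push_cast at h₁ h₂ ha
  refine ⟨a, Nat.cast_pos.1 ha, ?_⟩
  rw [eq_comm, Int.floor_eq_iff, le_div_iff₀ hα, div_lt_iff₀ hα]
  exact ⟨h₁.le, h₂⟩

theorem exists_lt_lt_of_mem_beatty {α : ℝ} (hα : Irrational α) (h0 : 0 < α) {m : ℤ}
    (hm : m ∈ beatty α) : ∃ n : ℕ, m * α < n ∧ n < (m + 1) * α := by
  obtain ⟨n, hn, rfl⟩ := hm
  obtain ⟨hle, hlt⟩ := Int.floor_eq_iff.mp (rfl : ⌊(n : ℝ) / α⌋ = _)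
  rw [le_div_iff₀ h0] at hle
  rw [div_lt_iff₀ h0] at hlt
  refine ⟨n, hle.lt_of_ne fun heq => ?_, hlt⟩
  rcases eq_or_ne ⌊(n : ℝ) / α⌋ 0 with h | h
  · rw [h, Int.cast_zero, zero_mul, eq_comm, Nat.cast_eq_zero] at heq
    omega
  · exact (hα.intCast_mul h).ne_nat n heq

theorem disjoint_beatty_of_add_eq_one {α β : ℝ} (hα : Irrational α) (hβ : Irrational β)
    (hα0 : 0 < α) (hβ0 : 0 < β) {r s : ℕ} (hr : 0 < r) (h : r * α + s * β = 1) :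
    Disjoint (beatty α) (beatty β) := by
  refine Set.disjoint_left.2 fun m hmα hmβ => ?_
  obtain ⟨n₁, h₁, h₁'⟩ := exists_lt_lt_of_mem_beatty hα hα0 hmα
  obtain ⟨n₂, h₂, h₂'⟩ := exists_lt_lt_of_mem_beatty hβ hβ0 hmβ
  have hr' : (0 : ℝ) < r := Nat.cast_pos.mpr hr
  have hs : (0 : ℝ) ≤ s := s.cast_nonneg
  have hlo : (m : ℝ) < r * n₁ + s * n₂ :=
    calc (m : ℝ) = r * (m * α) + s * (m * β) := by linear_combination (-(m : ℝ)) * h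
      _ < r * n₁ + s * n₂ := add_lt_add_of_lt_of_le (mul_lt_mul_of_pos_left h₁ hr')
          (mul_le_mul_of_nonneg_left h₂.le hs)
  have hhi : (r * n₁ + s * n₂ : ℝ) < m + 1 :=
    calc (r * n₁ + s * n₂ : ℝ) < r * ((m + 1) * α) + s * ((m + 1) * β) :=
          add_lt_add_of_lt_of_le (mul_lt_mul_of_pos_left h₁' hr')
            (mul_le_mul_of_nonneg_left h₂'.le hs)
      _ = m + 1 := by linear_combination ((m : ℝ) + 1) * h
  have hlo' : m < r * n₁ + s * n₂ := by exact_mod_cast hlo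
  have hhi' : r * n₁ + s * n₂ < m + 1 := by exact_mod_cast hhi
  omega

-- `ℤ (α, β) + ℤ²`, written so that `(a - m α, b - m β) ∈ (0, α) × (0, β)` says
-- `m α < a < (m + 1) α` and `m β < b < (m + 1) β`.
def beattyLattice (α β : ℝ) : AddSubgroup (ℝ × ℝ) where
  carrier := {x | ∃ m a b : ℤ, x = (a - m * α, b - m * β)}
  zero_mem' := ⟨0, 0, 0, by ext <;> simp⟩
  add_mem' := by
    rintro _ _ ⟨m, a, b, rfl⟩ ⟨m', a', b', rfl⟩
    exact ⟨m + m', a + a', b + b', by push_cast; ext <;> simp <;> ring⟩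
  neg_mem' := by
    rintro _ ⟨m, a, b, rfl⟩
    exact ⟨-m, -a, -b, by push_cast; ext <;> simp <;> ring⟩

theorem disjoint_beattyLattice_box {α β : ℝ} (hα0 : 0 < α) (hβ0 : 0 < β)
    (h : Disjoint (beatty α) (beatty β)) :
    Disjoint (beattyLattice α β : Set (ℝ × ℝ)) (Ioo 0 α ×ˢ Ioo 0 β) := by
  refine Set.disjoint_left.2 ?_
  rintro _ ⟨m, a, b, rfl⟩ ⟨⟨h₁, h₂⟩, h₃, h₄⟩
  obtain ⟨m', a', b', hm', ha', hb'⟩ : ∃ m' a' b' : ℤ, 0 ≤ m' ∧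
      (m' * α < a' ∧ a' < (m' + 1) * α) ∧ (m' * β < b' ∧ b' < (m' + 1) * β) := by
    rcases le_or_gt 0 m with hm | hm
    · exact ⟨m, a, b, hm, ⟨by linarith, by linarith⟩, by linarith, by linarith⟩
    -- the box is invariant under `x ↦ (α, β) - x`
    · refine ⟨-m - 1, -a, -b, by omega, ⟨?_, ?_⟩, ?_, ?_⟩ <;> push_cast <;> linarith
  exact Set.disjoint_left.1 h (mem_beatty_of_lt_of_lt hα0 hm' ha'.1 ha'.2)
    (mem_beatty_of_lt_of_lt hβ0 hm' hb'.1 hb'.2)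

theorem exists_nat_add_eq_one_of_disjoint_beatty {α β : ℝ} (hα : Irrational α)
    (hβ : Irrational β) (hα0 : 0 < α) (hβ0 : 0 < β) (h : Disjoint (beatty α) (beatty β)) :
    ∃ r s : ℕ, 0 < r ∧ 0 < s ∧ r * α + s * β = 1 := by
  set L := beattyLattice α β
  have hfract : ∀ n : ℕ, (Int.fract (n * α), Int.fract (n * β)) ∈ L := fun n =>
    ⟨-n, -⌊n * α⌋, -⌊n * β⌋, by ext <;> simp [← Int.self_sub_floor] <;> ring⟩
  obtain ⟨v, hvL, hv0, hv⟩ := AddSubgroup.exists_seq_tendsto_zero_of_injective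
    (isCompact_Icc.prod isCompact_Icc)
    (fun n n' h => hα.injective_fract_natCast_mul (congrArg Prod.fst h)) hfract
    fun n => ⟨⟨Int.fract_nonneg _, (Int.fract_lt_one _).le⟩,
      Int.fract_nonneg _, (Int.fract_lt_one _).le⟩
  obtain ⟨u, hu, hline⟩ := AddSubgroup.exists_ne_zero_forall_smul_mem_topologicalClosure hvL hv0 hv
  obtain ⟨a, b, hC⟩ := AddSubgroup.exists_int_forall_mem_iff_of_isClosed
    L.isClosed_topologicalClosure (L.le_topologicalClosure ⟨0, 1, 0, by simp⟩)
    (L.le_topologicalClosure ⟨0, 0, 1, by simp⟩) hu hline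
  obtain ⟨k, hk⟩ := (hC (α, β)).1 (L.le_topologicalClosure ⟨-1, 0, 0, by simp⟩)
  have hbox := (disjoint_beattyLattice_box hα0 hβ0 h).closure_left (isOpen_Ioo.prod isOpen_Ioo)
  rw [← AddSubgroup.topologicalClosure_coe] at hbox
  exact exists_nat_add_eq_one_of_forall_mem_box_ne hα hβ hα0 hβ0 hk
    fun x hx n hn => Set.disjoint_left.1 hbox ((hC x).2 ⟨n, hn⟩) hx

theorem beatty_disjoint_iff_general (α β : ℝ)
    (hirra : Irrational α) (hirrb : Irrational β)
    (ha0 : 0 < α) (hb0 : 0 < β) :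
    Disjoint (beatty α) (beatty β) ↔
      ∃ r s : ℕ, 0 < r ∧ 0 < s ∧ (r : ℝ) * α + (s : ℝ) * β = 1 :=
  ⟨exists_nat_add_eq_one_of_disjoint_beatty hirra hirrb ha0 hb0,
    fun ⟨_, _, hr, _, h⟩ => disjoint_beatty_of_add_eq_one hirra hirrb ha0 hb0 hr h⟩

theorem beatty_disjoint_iff (α β : ℝ)
    (hirra : Irrational α) (hirrb : Irrational β)
    (ha0 : 0 < α) (ha1 : α < 1) (hb0 : 0 < β) (hb1 : β < 1) :
    Disjoint (beatty α) (beatty β) ↔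
      ∃ r s : ℕ, 0 < r ∧ 0 < s ∧ (r : ℝ) * α + (s : ℝ) * β = 1 :=
  beatty_disjoint_iff_general α β hirra hirrb ha0 hb0
end

section
/- Let α, β, γ be positive irrational numbers with α + β + γ = 1 and β/γ irrational. Define b̃(n) = ⌊⌊n(1-α)/β⌋ / (1-α)⌋ and c̃(n) = ⌊⌊n(1-α)/γ⌋ / (1-α)⌋. Then the sets B_α, {b̃(n) : n ≥ 1}, and {c̃(n) : n ≥ 1} form a partition of the positive integers. -/
open scoped Classical
open scoped symmDiff

noncomputable def iterBeatty (α θ : ℝ) (n : ℕ) : ℤ :=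
  ⌊(⌊(n : ℝ) * (1 - α) / θ⌋ : ℝ) / (1 - α)⌋

/-! The iterated Beatty sequence for `θ` is the image of `B_{θ/(1-α)}` under `k ↦ ⌊k / (1 - α)⌋`,
the map whose image of the positive integers is `B_{1-α}`. Rayleigh's theorem splits the positive
integers into `B_α` and `B_{1-α}`, and, as `β/(1-α) + γ/(1-α) = 1` with `β/(1-α)` irrational, also
into `B_{β/(1-α)}` and `B_{γ/(1-α)}`; the map being injective, it carries the second splitting onto
`B_{1-α}`. -/

lemma floor_div_strictMono {t : ℝ} (ht₀ : 0 < t) (ht₁ : t ≤ 1) :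
    StrictMono fun k : ℤ => ⌊(k : ℝ) / t⌋ := by
  intro k k' hkk'
  have hk : (k : ℝ) + 1 ≤ k' := by exact_mod_cast hkk'
  have : (k : ℝ) / t + 1 ≤ k' / t := by
    rw [div_add_one ht₀.ne', div_le_div_iff_of_pos_right ht₀]
    linarith
  calc ⌊(k : ℝ) / t⌋ < ⌊(k : ℝ) / t⌋ + 1 := Int.lt_succ _
    _ = ⌊(k : ℝ) / t + 1⌋ := (Int.floor_add_one _).symm
    _ ≤ ⌊(k' : ℝ) / t⌋ := Int.floor_le_floor this

lemma beatty_eq_image (t : ℝ) : beatty t = (fun k : ℤ => ⌊(k : ℝ) / t⌋) '' {k | 0 < k} := by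
  ext m
  constructor
  · rintro ⟨n, hn, rfl⟩
    exact ⟨n, show (0 : ℤ) < n by exact_mod_cast hn, by norm_cast⟩
  · rintro ⟨k, hk : 0 < k, rfl⟩
    have hk' : ((k.toNat : ℕ) : ℝ) = k := by exact_mod_cast Int.toNat_of_nonneg hk.le
    exact ⟨k.toNat, by omega, by rw [hk']⟩

lemma beatty_eq_beattySeq (t : ℝ) : beatty t = {beattySeq t⁻¹ k | k > 0} := by
  simp only [beatty_eq_image, beattySeq, ← div_eq_mul_inv]
  rfl

lemma beatty_subset_pos {t : ℝ} (ht₀ : 0 < t) (ht₁ : t ≤ 1) : beatty t ⊆ {m | 0 < m} := by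
  rintro _ ⟨n, hn, rfl⟩
  have hn : (1 : ℝ) ≤ n := by exact_mod_cast hn
  have : (1 : ℝ) ≤ n / t := by rw [le_div_iff₀ ht₀]; linarith
  exact Int.floor_pos.mpr this

theorem beatty_symmDiff_beatty {a b : ℝ} (ha : Irrational a) (ha₀ : 0 < a) (hb₀ : 0 < b)
    (hab : a + b = 1) : beatty a ∆ beatty b = {m | 0 < m} := by
  rw [beatty_eq_beattySeq, beatty_eq_beattySeq]
  exact ha.inv.beattySeq_symmDiff_beattySeq_pos (.inv_inv ha₀ hb₀ hab)

theorem disjoint_beatty {a b : ℝ} (ha : Irrational a) (ha₀ : 0 < a) (hb₀ : 0 < b)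
    (hab : a + b = 1) : Disjoint (beatty a) (beatty b) := by
  rw [Set.disjoint_left]
  intro m hma hmb
  have hm : m ∈ beatty a ∆ beatty b := by
    rw [beatty_symmDiff_beatty ha ha₀ hb₀ hab]
    exact beatty_subset_pos ha₀ (by linarith) hma
  rw [Set.mem_symmDiff] at hm
  tauto

theorem beatty_union_beatty {a b : ℝ} (ha : Irrational a) (ha₀ : 0 < a) (hb₀ : 0 < b)
    (hab : a + b = 1) : beatty a ∪ beatty b = {m | 0 < m} :=
  (disjoint_beatty ha ha₀ hb₀ hab).symmDiff_eq_sup.symm.trans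
    (beatty_symmDiff_beatty ha ha₀ hb₀ hab)

lemma Irrational.div_add_self_right {x y : ℝ} (h : Irrational (x / y)) :
    Irrational (x / (x + y)) := by
  have hx : x ≠ 0 := by rintro rfl; simp at h
  have hy : y ≠ 0 := by rintro rfl; simp at h
  have : x / (x + y) = (1 + (x / y)⁻¹)⁻¹ := by field_simp
  rw [this, irrational_inv_iff]
  exact_mod_cast h.inv.natCast_add 1

lemma exists_iterBeatty_iff (α θ : ℝ) (m : ℤ) :
    (∃ n : ℕ, 0 < n ∧ m = iterBeatty α θ n) ↔
      m ∈ (fun k : ℤ => ⌊(k : ℝ) / (1 - α)⌋) '' beatty (θ / (1 - α)) := by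
  simp only [iterBeatty, beatty, Set.mem_image, Set.mem_ofPred_eq, div_div_eq_mul_div]
  constructor
  · rintro ⟨n, hn, rfl⟩
    exact ⟨_, ⟨n, hn, rfl⟩, rfl⟩
  · rintro ⟨_, ⟨n, hn, rfl⟩, rfl⟩
    exact ⟨n, hn, rfl⟩

lemma mem_trichotomy_of_mem_symmDiff_image_union {α β : Type*} {f : α → β}
    (hf : Function.Injective f) {A : Set β} {C D : Set α} (hCD : Disjoint C D) {m : β}
    (hm : m ∈ A ∆ (f '' (C ∪ D))) :
    (m ∈ A ∧ m ∉ f '' C ∧ m ∉ f '' D) ∨ (m ∉ A ∧ m ∈ f '' C ∧ m ∉ f '' D) ∨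
      (m ∉ A ∧ m ∉ f '' C ∧ m ∈ f '' D) := by
  have hfCD : Disjoint (f '' C) (f '' D) := (Set.disjoint_image_iff hf).mpr hCD
  rw [Set.image_union, Set.mem_symmDiff, Set.mem_union] at hm
  have : m ∈ f '' C → m ∉ f '' D := fun h => Set.disjoint_left.mp hfCD h
  tauto

theorem iterated_beatty_partition_general (α β γ : ℝ)
    (hirra : Irrational α)
    (ha : 0 < α) (hb : 0 < β) (hc : 0 < γ) (hsum : α + β + γ = 1)
    (hratio : Irrational (β / γ)) :
    ∀ m : ℤ, 0 < m →
      ((m ∈ beatty α ∧ ¬(∃ n : ℕ, 0 < n ∧ m = iterBeatty α β n) ∧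
          ¬(∃ n : ℕ, 0 < n ∧ m = iterBeatty α γ n)) ∨
       (m ∉ beatty α ∧ (∃ n : ℕ, 0 < n ∧ m = iterBeatty α β n) ∧
          ¬(∃ n : ℕ, 0 < n ∧ m = iterBeatty α γ n)) ∨
       (m ∉ beatty α ∧ ¬(∃ n : ℕ, 0 < n ∧ m = iterBeatty α β n) ∧
          (∃ n : ℕ, 0 < n ∧ m = iterBeatty α γ n))) := by
  intro m hm
  have hα' : 1 - α = β + γ := by linarith
  have hβ' : 0 < β / (1 - α) := div_pos hb (by linarith)
  have hγ' : 0 < γ / (1 - α) := div_pos hc (by linarith)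
  have hβγ : β / (1 - α) + γ / (1 - α) = 1 := by
    rw [← add_div, hα']; exact div_self (by linarith)
  have hirrβ : Irrational (β / (1 - α)) := hα' ▸ hratio.div_add_self_right
  have hsplit : beatty α ∆ ((fun k : ℤ => ⌊(k : ℝ) / (1 - α)⌋) ''
      (beatty (β / (1 - α)) ∪ beatty (γ / (1 - α)))) = {m | 0 < m} := by
    rw [beatty_union_beatty hirrβ hβ' hγ' hβγ, ← beatty_eq_image]
    exact beatty_symmDiff_beatty hirra ha (by linarith) (by ring)
  simp only [exists_iterBeatty_iff]
  exact mem_trichotomy_of_mem_symmDiff_image_union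
    (floor_div_strictMono (by linarith) (by linarith)).injective
    (disjoint_beatty hirrβ hβ' hγ' hβγ) (hsplit ▸ hm)

theorem iterated_beatty_partition (α β γ : ℝ)
    (hirra : Irrational α) (hirrb : Irrational β) (hirrc : Irrational γ)
    (ha : 0 < α) (hb : 0 < β) (hc : 0 < γ) (hsum : α + β + γ = 1)
    (hratio : Irrational (β / γ)) :
    ∀ m : ℤ, 0 < m →
      ((m ∈ beatty α ∧ ¬(∃ n : ℕ, 0 < n ∧ m = iterBeatty α β n) ∧
          ¬(∃ n : ℕ, 0 < n ∧ m = iterBeatty α γ n)) ∨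
       (m ∉ beatty α ∧ (∃ n : ℕ, 0 < n ∧ m = iterBeatty α β n) ∧
          ¬(∃ n : ℕ, 0 < n ∧ m = iterBeatty α γ n)) ∨
       (m ∉ beatty α ∧ ¬(∃ n : ℕ, 0 < n ∧ m = iterBeatty α β n) ∧
          (∃ n : ℕ, 0 < n ∧ m = iterBeatty α γ n))) :=
  iterated_beatty_partition_general α β γ hirra ha hb hc hsum hratio
end

section
/- Let α, β be positive irrational numbers with α + β < 1 and β/(1-α-β) irrational. Define b(n) = ⌊n/β⌋ and b̃(n) = ⌊⌊n(1-α)/β⌋ / (1-α)⌋. Then for all positive integers n, 0 ≤ b(n) - b̃(n) ≤ ⌊(2-α)/(1-α)⌋. -/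
open scoped Classical

theorem iterated_beatty_error (α β : ℝ)
    (hirra : Irrational α) (hirrb : Irrational β)
    (ha : 0 < α) (hb : 0 < β) (hab : α + β < 1)
    (hratio : Irrational (β / (1 - α - β))) :
    ∀ n : ℕ, 0 < n →
      0 ≤ ⌊(n : ℝ) / β⌋ - iterBeatty α β n ∧
      ⌊(n : ℝ) / β⌋ - iterBeatty α β n ≤ ⌊(2 - α) / (1 - α)⌋ := by
  intro n hn
  have hc : (0:ℝ) < 1 - α := by linarith
  set X : ℝ := (⌊(n : ℝ) * (1 - α) / β⌋ : ℝ) with hX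
  have key1 : X ≤ (n : ℝ) * (1 - α) / β := Int.floor_le _
  have key2 : (n : ℝ) * (1 - α) / β - 1 < X := Int.sub_one_lt_floor _
  have hdiv1 : X / (1 - α) ≤ (n : ℝ) / β := by
    rw [div_le_div_iff₀ hc hb]
    have h : (n : ℝ) * (1 - α) / β * β = (n : ℝ) * (1 - α) := by field_simp
    nlinarith [key1]
  have hdiv2 : (n : ℝ) / β - 1 / (1 - α) < X / (1 - α) := by
    rw [sub_lt_iff_lt_add, div_add_div X 1 (ne_of_gt hc) (ne_of_gt hc),
      div_lt_div_iff₀ hb (by positivity : (0:ℝ) < (1 - α) * (1 - α))]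
    have h : (n : ℝ) * (1 - α) / β * β = (n : ℝ) * (1 - α) := by field_simp
    nlinarith [key2, mul_pos hb hc]
  have hIB : iterBeatty α β n = ⌊X / (1 - α)⌋ := by rw [hX]; rfl
  constructor
  · have := Int.floor_le_floor hdiv1
    omega
  · rw [Int.le_floor]
    push_cast
    have h1 : (⌊(n : ℝ) / β⌋ : ℝ) ≤ (n : ℝ) / β := Int.floor_le _
    have h2 : X / (1 - α) - 1 < ((iterBeatty α β n : ℤ) : ℝ) := by
      rw [hIB]; exact Int.sub_one_lt_floor _
    have h3 : (2 - α) / (1 - α) = 1 + 1 / (1 - α) := by field_simp; ring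
    rw [h3]
    linarith
end

section
/- Let α, β, γ be positive irrational numbers with α + β + γ = 1 and max(α, β) < γ. Define b̃(n) = b(n) if b(n) ∉ B_α and b̃(n) = b(n) - 1 if b(n) ∈ B_α, where b(n) = ⌊n/β⌋. Then the set B̃_β = {b̃(n) : n ≥ 1} is disjoint from B_α. -/
open scoped Classical

noncomputable def btil (α β : ℝ) (n : ℕ) : ℤ :=
  if ⌊(n : ℝ) / β⌋ ∈ beatty α then ⌊(n : ℝ) / β⌋ - 1 else ⌊(n : ℝ) / β⌋

lemma no_consec (α : ℝ) (ha : 0 < α) (hhalf : α < 1/2) (m : ℤ)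
    (h1 : m ∈ beatty α) (h2 : m - 1 ∈ beatty α) : False := by
  obtain ⟨n', hn', hm⟩ := h1
  obtain ⟨n, hn, hm1⟩ := h2
  have hlt : (n : ℕ) < n' := by
    by_contra h
    push_neg at h
    have : ⌊(n' : ℝ) / α⌋ ≤ ⌊(n : ℝ) / α⌋ := by
      apply Int.floor_le_floor
      have hc : (n' : ℝ) ≤ (n : ℝ) := by exact_mod_cast h
      gcongr
    omega
  have hn1 : (n : ℝ) + 1 ≤ (n' : ℝ) := by exact_mod_cast hlt
  have h2le : (2 : ℤ) ≤ ⌊(1 : ℝ) / α⌋ := by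
    apply Int.le_floor.2
    push_cast
    rw [le_div_iff₀ ha]; linarith
  have hadd : ⌊(n : ℝ) / α⌋ + ⌊(1 : ℝ) / α⌋ ≤ ⌊((n : ℝ) + 1) / α⌋ := by
    apply Int.le_floor.2
    push_cast
    rw [add_div]
    have := Int.floor_le ((n : ℝ) / α)
    have := Int.floor_le ((1 : ℝ) / α)
    linarith
  have hmono : ⌊((n : ℝ) + 1) / α⌋ ≤ ⌊(n' : ℝ) / α⌋ := by
    apply Int.floor_le_floor
    gcongr
  omega

theorem shifted_beta_disjoint (α β γ : ℝ)
    (hirra : Irrational α) (hirrb : Irrational β) (hirrc : Irrational γ)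
    (ha : 0 < α) (hb : 0 < β) (hc : 0 < γ) (hsum : α + β + γ = 1)
    (hmax : max α β < γ) :
    Disjoint {m : ℤ | ∃ n : ℕ, 0 < n ∧ m = btil α β n} (beatty α) := by
  have hag : α < γ := lt_of_le_of_lt (le_max_left α β) hmax
  have hhalf : α < 1/2 := by linarith
  rw [Set.disjoint_left]
  rintro m ⟨n, hn, rfl⟩ hmem
  unfold btil at hmem
  split_ifs at hmem with h
  · exact no_consec α ha hhalf _ h hmem
  · exact h hmem
end

section
/- Let α, β, γ be positive irrational numbers with α + β + γ = 1 and max(α, β) < γ. Set B̃_β = {b̃(n)} with b̃(n) = b(n) - [b(n) ∈ B_α], and let B̃_γ = ℕ \ (B_α ∪ B̃_β) with increasing enumeration (c̃(n)). Then for all n, c(n) - c̃(n) ∈ {0, 1, 2}, where c(n) = ⌊n/γ⌋. -/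
open scoped Classical

/-!
Counting `B̃_γ ∩ [1, M - 1]` by telescoping the indicators of `B_α` and `B̃_β` gives
`M - 1 - ⌊Mα⌋ - ⌊Mβ⌋ - [M ∈ B_α ∩ B_β]`. Since the fractional parts of `Mα`, `Mβ`, `Mγ` sum to
1 or 2, and to 2 whenever `M ∈ B_α ∩ B_β`, this count lies between `⌊Mγ⌋` and `⌊(M + 2)γ⌋`.
As `c̃(n) ≤ m` exactly when `B̃_γ ∩ [1, m]` has at least `n` elements, the choices
`M = c(n) + 1` and `M = c(n) - 2` give `c(n) - 2 ≤ c̃(n) ≤ c(n)`.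
-/

open Int

theorem countLe_nonpos (S : Set ℤ) {m : ℤ} (hm : m ≤ 0) : countLe S m = 0 := by
  simp [countLe, Finset.Icc_eq_empty_of_lt (show m < 1 by omega)]

theorem countLe_add_one (S : Set ℤ) {m : ℤ} (hm : 0 ≤ m) :
    (countLe S (m + 1) : ℤ) = countLe S m + if m + 1 ∈ S then 1 else 0 := by
  unfold countLe
  rw [← Finset.insert_Icc_right_eq_Icc_add_one (by omega), Finset.filter_insert]
  split_ifs
  · rw [Finset.card_insert_of_notMem (by simp)]; push_cast; ring
  · simp

theorem countLe_eq_sub_of_ite_mem_eq {S : Set ℤ} {F : ℤ → ℤ}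
    (hF : ∀ k, 0 < k → (if k ∈ S then 1 else 0) = F (k + 1) - F k) {m : ℤ} (hm : 0 ≤ m) :
    (countLe S m : ℤ) = F (m + 1) - F 1 := by
  induction m, hm using Int.leInduction with
  | base => simp [countLe_nonpos]
  | succ m hm ih => rw [countLe_add_one S hm, ih, hF (m + 1) (by omega)]; ring

section Enumeration

variable {S : Set ℤ} {e : ℕ → ℤ} (hstrict : StrictMonoOn e (Set.Ioi 0))
include hstrict

theorem countLe_lt_of_lt (hsurj : ∀ x ∈ S, ∃ n : ℕ, 0 < n ∧ e n = x) {n : ℕ} (hn : 0 < n)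
    {m : ℤ} (hm : m < e n) : countLe S m < n := by
  have hsub : (Finset.Icc 1 m).filter (· ∈ S) ⊆ (Finset.Icc 1 (n - 1)).image e := by
    intro x hx
    simp only [Finset.mem_filter, Finset.mem_Icc] at hx
    obtain ⟨i, hi, rfl⟩ := hsurj x hx.2
    have : i < n := by
      by_contra! hni
      have := hstrict.monotoneOn hn hi hni
      omega
    exact Finset.mem_image.2 ⟨i, Finset.mem_Icc.2 ⟨hi, by omega⟩, rfl⟩
  have := (Finset.card_le_card hsub).trans Finset.card_image_le
  rw [Nat.card_Icc] at this
  unfold countLe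
  omega

theorem le_countLe_of_le (hpos : ∀ x ∈ S, 0 < x) (hmem : ∀ n : ℕ, 0 < n → e n ∈ S) {n : ℕ}
    (hn : 0 < n) {m : ℤ} (hm : e n ≤ m) : n ≤ countLe S m := by
  have hsub : (Finset.Icc 1 n).image e ⊆ (Finset.Icc 1 m).filter (· ∈ S) := by
    intro x hx
    obtain ⟨i, hi, rfl⟩ := Finset.mem_image.1 hx
    rw [Finset.mem_Icc] at hi
    have hei := hstrict.monotoneOn hi.1 hn hi.2
    simp only [Finset.mem_filter, Finset.mem_Icc]
    exact ⟨⟨hpos _ (hmem i hi.1), hei.trans hm⟩, hmem i hi.1⟩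
  have hinj : Set.InjOn e (Finset.Icc 1 n) := hstrict.injOn.mono fun i hi => (Finset.mem_Icc.1 hi).1
  have := Finset.card_le_card hsub
  rwa [Finset.card_image_of_injOn hinj, Nat.card_Icc, Nat.add_sub_cancel] at this

theorem le_countLe_iff (hpos : ∀ x ∈ S, 0 < x) (hmem : ∀ n : ℕ, 0 < n → e n ∈ S)
    (hsurj : ∀ x ∈ S, ∃ n : ℕ, 0 < n ∧ e n = x) {n : ℕ} (hn : 0 < n) (m : ℤ) :
    n ≤ countLe S m ↔ e n ≤ m :=
  ⟨fun h => not_lt.1 fun hm => (countLe_lt_of_lt hstrict hsurj hn hm).not_ge h,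
    le_countLe_of_le hstrict hpos hmem hn⟩

end Enumeration

theorem floor_lt_floor_add_iff (x a : ℝ) : ⌊x⌋ < ⌊x + a⌋ ↔ 1 - a ≤ fract x := by
  rw [Int.lt_iff_add_one_le, Int.le_floor, ← Int.self_sub_floor]
  push_cast
  constructor <;> intro h <;> linarith

theorem sub_floor_sub_floor_sub_floor_eq {x y z : ℝ} {M : ℤ} (h : x + y + z = M) :
    ((M - ⌊x⌋ - ⌊y⌋ - ⌊z⌋ : ℤ) : ℝ) = fract x + fract y + fract z := by
  simp only [← Int.self_sub_floor]
  push_cast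
  linarith

section Beatty

variable {α : ℝ}

theorem mem_beatty_iff_exists (hα : 0 < α) {k : ℤ} (hk : 0 < k) :
    k ∈ beatty α ↔ ∃ n : ℤ, k * α ≤ n ∧ n < (k + 1) * α := by
  have key : ∀ n : ℤ, k = ⌊(n : ℝ) / α⌋ ↔ k * α ≤ n ∧ n < (k + 1) * α := fun n => by
    rw [eq_comm, Int.floor_eq_iff, le_div_iff₀ hα, div_lt_iff₀ hα]
  constructor
  · rintro ⟨n, -, hn⟩
    exact ⟨n, by exact_mod_cast (key n).1 hn⟩
  · rintro ⟨n, hn⟩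
    have hn0 : 0 < n := by exact_mod_cast (show (0 : ℝ) < k * α by positivity).trans_le hn.1
    refine ⟨n.toNat, by omega, ?_⟩
    rw [← Int.cast_natCast, Int.toNat_of_nonneg hn0.le]
    exact (key n).2 hn

theorem mem_beatty_iff_floor_lt (hα : 0 < α) (hirr : Irrational α) {k : ℤ} (hk : 0 < k) :
    k ∈ beatty α ↔ ⌊k * α⌋ < ⌊(k + 1) * α⌋ := by
  rw [mem_beatty_iff_exists hα hk]
  constructor
  · rintro ⟨n, hkn, hnk⟩
    have hne : (k : ℝ) * α ≠ n := (hirr.intCast_mul hk.ne').ne_int n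
    exact (Int.floor_lt.2 (lt_of_le_of_ne hkn hne)).trans_le (Int.le_floor.2 hnk.le)
  · intro h
    refine ⟨⌊(k + 1) * α⌋, (Int.floor_lt.1 h).le, lt_of_le_of_ne (Int.floor_le _) ?_⟩
    exact_mod_cast ((hirr.intCast_mul (m := k + 1) (by omega)).ne_int _).symm

theorem ite_mem_beatty (hα : 0 < α) (hα1 : α ≤ 1) (hirr : Irrational α) {k : ℤ} (hk : 0 < k) :
    (if k ∈ beatty α then 1 else 0 : ℤ) = ⌊(k + 1) * α⌋ - ⌊k * α⌋ := by
  have hmono : ⌊k * α⌋ ≤ ⌊(k + 1) * α⌋ := Int.floor_mono (by nlinarith)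
  have hstep : ⌊(k + 1) * α⌋ ≤ ⌊k * α⌋ + 1 := by
    rw [← Int.floor_add_one]; exact Int.floor_mono (by linarith)
  split_ifs with h <;> rw [mem_beatty_iff_floor_lt hα hirr hk] at h <;> omega

theorem mem_beatty_iff_one_sub_le_fract (hα : 0 < α) (hirr : Irrational α) {k : ℤ}
    (hk : 0 < k) : k ∈ beatty α ↔ 1 - α ≤ fract (k * α) := by
  rw [mem_beatty_iff_floor_lt hα hirr hk, add_one_mul, floor_lt_floor_add_iff]

theorem add_one_notMem_beatty (hα : 0 < α) (h2α : 2 * α ≤ 1) {k : ℤ} (hk : 0 < k)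
    (h : k ∈ beatty α) : k + 1 ∉ beatty α := by
  intro h'
  obtain ⟨n, hn⟩ := (mem_beatty_iff_exists hα hk).1 h
  obtain ⟨n', hn'⟩ := (mem_beatty_iff_exists hα (by omega)).1 h'
  push_cast at hn'
  have : n < n' := by exact_mod_cast (show (n : ℝ) < n' by linarith)
  have : (n : ℝ) + 1 ≤ n' := by exact_mod_cast this
  linarith

theorem one_notMem_beatty (hα : 0 < α) (h2α : 2 * α < 1) : 1 ∉ beatty α := by
  intro h
  obtain ⟨n, hn⟩ := (mem_beatty_iff_exists hα one_pos).1 h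
  push_cast at hn
  have : 0 < n := by exact_mod_cast (show (0 : ℝ) < n by linarith)
  have : n < 1 := by exact_mod_cast (show (n : ℝ) < 1 by linarith)
  omega

end Beatty

def btilSet (α β : ℝ) : Set ℤ := {m | ∃ n : ℕ, 0 < n ∧ m = btil α β n}

def ctilSet (α β : ℝ) : Set ℤ := {m | 0 < m ∧ m ∉ beatty α ∧ m ∉ btilSet α β}

section Tilde

variable {α β : ℝ}

theorem mem_btilSet_iff {k : ℤ} : k ∈ btilSet α β ↔
    (k ∈ beatty β ∧ k ∉ beatty α) ∨ (k + 1 ∈ beatty β ∧ k + 1 ∈ beatty α) := by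
  constructor
  · rintro ⟨n, hn, rfl⟩
    unfold btil
    split_ifs with h
    · exact Or.inr ⟨by simpa using ⟨n, hn, rfl⟩, by simpa using h⟩
    · exact Or.inl ⟨⟨n, hn, rfl⟩, h⟩
  · rintro (⟨⟨n, hn, rfl⟩, h⟩ | ⟨⟨n, hn, hk⟩, h⟩)
    · exact ⟨n, hn, by simp [btil, h]⟩
    · refine ⟨n, hn, ?_⟩
      rw [btil, ← hk, if_pos h]
      ring

theorem notMem_btilSet_of_mem_beatty (hα : 0 < α) (h2α : 2 * α ≤ 1) {k : ℤ} (hk : 0 < k)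
    (h : k ∈ beatty α) : k ∉ btilSet α β := by
  rw [mem_btilSet_iff]
  have := add_one_notMem_beatty hα h2α hk h
  tauto

theorem ite_mem_btilSet (hβ : 0 < β) (h2β : 2 * β ≤ 1) {k : ℤ} (hk : 0 < k) :
    (if k ∈ btilSet α β then 1 else 0 : ℤ) = (if k ∈ beatty β then 1 else 0)
      - (if k ∈ beatty α ∧ k ∈ beatty β then 1 else 0)
      + (if k + 1 ∈ beatty α ∧ k + 1 ∈ beatty β then 1 else 0) := by
  have := add_one_notMem_beatty hβ h2β hk
  rw [mem_btilSet_iff]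
  split_ifs <;> tauto

theorem ite_mem_ctilSet (hα : 0 < α) (h2α : 2 * α ≤ 1) {k : ℤ} (hk : 0 < k) :
    (if k ∈ ctilSet α β then 1 else 0 : ℤ) =
      1 - (if k ∈ beatty α then 1 else 0) - (if k ∈ btilSet α β then 1 else 0) := by
  have := @notMem_btilSet_of_mem_beatty α β hα h2α k hk
  have hmem : k ∈ ctilSet α β ↔ k ∉ beatty α ∧ k ∉ btilSet α β := by simp [ctilSet, hk]
  simp only [hmem]
  split_ifs <;> tauto

end Tilde

section Bounds

variable {α β γ : ℝ} (hα : 0 < α) (hβ : 0 < β) (hirrα : Irrational α) (hirrβ : Irrational β)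
include hα hβ hirrα hirrβ

theorem countLe_ctilSet_sub_one (h2α : 2 * α < 1) (h2β : 2 * β ≤ 1) {M : ℤ} (hM : 0 < M) :
    (countLe (ctilSet α β) (M - 1) : ℤ) = M - 1 - ⌊M * α⌋ - ⌊M * β⌋
      - if M ∈ beatty α ∧ M ∈ beatty β then 1 else 0 := by
  have hcount := countLe_eq_sub_of_ite_mem_eq (S := ctilSet α β) (m := M - 1)
    (F := fun k => k - ⌊k * α⌋ - ⌊k * β⌋ - if k ∈ beatty α ∧ k ∈ beatty β then 1 else 0)
    (fun k hk => by
      rw [ite_mem_ctilSet hα h2α.le hk, ite_mem_btilSet hβ h2β hk,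
        ite_mem_beatty hα (by linarith) hirrα hk, ite_mem_beatty hβ (by linarith) hirrβ hk]
      push_cast
      ring) (by omega)
  have hfloor : ∀ {a : ℝ}, 0 < a → 2 * a ≤ 1 → ⌊((1 : ℤ) : ℝ) * a⌋ = 0 := fun ha h2a => by
    rw [Int.cast_one, one_mul, Int.floor_eq_zero_iff]; constructor <;> linarith
  have hone : ¬(1 ∈ beatty α ∧ 1 ∈ beatty β) := fun h => one_notMem_beatty hα h2α h.1
  rw [hcount, sub_add_cancel, hfloor hα h2α.le, hfloor hβ h2β, if_neg hone]
  ring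

variable (hsum : α + β + γ = 1) (hαγ : α ≤ γ) (hβγ : β ≤ γ)
include hsum hαγ hβγ

theorem floor_mul_le_countLe_ctilSet (hirrγ : Irrational γ) {M : ℤ} (hM : 0 < M) :
    ⌊M * γ⌋ ≤ (countLe (ctilSet α β) (M - 1) : ℤ) := by
  rw [countLe_ctilSet_sub_one hα hβ hirrα hirrβ (by linarith) (by linarith) hM]
  have hS := sub_floor_sub_floor_sub_floor_eq (x := M * α) (y := M * β) (z := M * γ)
    (by linear_combination (M : ℝ) * hsum)
  set S := M - ⌊M * α⌋ - ⌊M * β⌋ - ⌊M * γ⌋ with hSdef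
  have hz : 0 < fract ((M : ℝ) * γ) := Int.fract_pos.2 ((hirrγ.intCast_mul hM.ne').ne_int _)
  split_ifs with hδ
  · rw [mem_beatty_iff_one_sub_le_fract hα hirrα hM,
      mem_beatty_iff_one_sub_le_fract hβ hirrβ hM] at hδ
    have : (1 : ℝ) < S := by rw [hS]; linarith [hδ.1, hδ.2]
    have : 1 < S := by exact_mod_cast this
    omega
  · have : (0 : ℝ) < S := by
      rw [hS]; linarith [Int.fract_nonneg ((M : ℝ) * α), Int.fract_nonneg ((M : ℝ) * β)]
    have : 0 < S := by exact_mod_cast this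
    omega

theorem countLe_ctilSet_le_floor_mul {M : ℤ} (hM : 0 < M) :
    (countLe (ctilSet α β) (M - 1) : ℤ) ≤ ⌊(M + 2) * γ⌋ := by
  rw [countLe_ctilSet_sub_one hα hβ hirrα hirrβ (by linarith) (by linarith) hM]
  have hS := sub_floor_sub_floor_sub_floor_eq (x := M * α) (y := M * β) (z := M * γ)
    (by linear_combination (M : ℝ) * hsum)
  set S := M - ⌊M * α⌋ - ⌊M * β⌋ - ⌊M * γ⌋ with hSdef
  have hfa := Int.fract_lt_one ((M : ℝ) * α)
  have hfb := Int.fract_lt_one ((M : ℝ) * β)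
  have hfc := Int.fract_lt_one ((M : ℝ) * γ)
  have hS2 : S ≤ 2 := by
    have : (S : ℝ) < 3 := by rw [hS]; linarith
    have : S < 3 := by exact_mod_cast this
    omega
  have hmono : ⌊M * γ⌋ ≤ ⌊(M + 2) * γ⌋ := Int.floor_mono (by linarith)
  split_ifs with hδ
  · omega
  rcases (show S ≤ 1 ∨ S = 2 by omega) with hS1 | hS2
  · omega
  -- a fractional part of `M * γ` below `1 - 2γ` would force both `M ∈ B_α` and `M ∈ B_β`
  have hfz : 1 - 2 * γ ≤ fract ((M : ℝ) * γ) := by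
    by_contra! hlt
    have h2 : fract ((M : ℝ) * α) + fract ((M : ℝ) * β) + fract ((M : ℝ) * γ) = 2 := by
      rw [← hS, hS2]; norm_num
    rw [mem_beatty_iff_one_sub_le_fract hα hirrα hM,
      mem_beatty_iff_one_sub_le_fract hβ hirrβ hM] at hδ
    exact hδ ⟨by linarith, by linarith⟩
  have := (floor_lt_floor_add_iff _ _).2 hfz
  rw [show ((M : ℝ) + 2) * γ = M * γ + 2 * γ by ring]
  omega

end Bounds

theorem floor_div_mul_lt {γ : ℝ} (hγ : 0 < γ) (hirr : Irrational γ) {n : ℕ} (hn : n ≠ 0) :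
    ⌊(n : ℝ) / γ⌋ * γ < n := by
  rw [← lt_div_iff₀ hγ]
  exact lt_of_le_of_ne (Int.floor_le _) ((hirr.natCast_div hn).ne_int _).symm

theorem thm3_gamma_error (α β γ : ℝ)
    (hirra : Irrational α) (hirrb : Irrational β) (hirrc : Irrational γ)
    (ha : 0 < α) (hb : 0 < β) (hc : 0 < γ) (hsum : α + β + γ = 1)
    (hmax : max α β < γ)
    (Btβ : Set ℤ) (hBtβ : Btβ = {m : ℤ | ∃ n : ℕ, 0 < n ∧ m = btil α β n})
    (Btγ : Set ℤ) (hBtγ : Btγ = {m : ℤ | 0 < m ∧ m ∉ beatty α ∧ m ∉ Btβ})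
    (ct : ℕ → ℤ)
    (hmono : ∀ n m : ℕ, 0 < n → n < m → ct n < ct m)
    (hmem : ∀ n : ℕ, 0 < n → ct n ∈ Btγ)
    (hsurj : ∀ x ∈ Btγ, ∃ n : ℕ, 0 < n ∧ ct n = x) :
    ∀ n : ℕ, 0 < n → ⌊(n : ℝ) / γ⌋ - ct n ∈ ({0, 1, 2} : Set ℤ) := by
  intro n hn
  subst hBtβ hBtγ
  have hαγ : α ≤ γ := (le_max_left α β).trans hmax.le
  have hβγ : β ≤ γ := (le_max_right α β).trans hmax.le
  have hle := le_countLe_iff (S := ctilSet α β)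
    (fun i hi j _ hij => hmono i j hi hij) (fun x hx => hx.1) hmem hsurj hn
  have hct : 0 < ct n := (hmem n hn).1
  set c := ⌊(n : ℝ) / γ⌋
  have hcn : c * γ < n := floor_div_mul_lt hc hirrc hn.ne'
  have hnc : (n : ℝ) < (c + 1) * γ := (div_lt_iff₀ hc).1 (Int.lt_floor_add_one _)
  have hc0 : 0 ≤ c := Int.floor_nonneg.2 (by positivity)
  have hupper : ct n ≤ c := by
    refine (hle c).1 ?_
    have h := floor_mul_le_countLe_ctilSet ha hb hirra hirrb hsum hαγ hβγ hirrc (M := c + 1)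
      (by omega)
    have : (n : ℤ) ≤ ⌊((c + 1 : ℤ) : ℝ) * γ⌋ := Int.le_floor.2 (by push_cast; exact hnc.le)
    rw [add_sub_cancel_right] at h
    omega
  have hlower : c - 2 ≤ ct n := by
    by_contra! h
    have h1 := (hle (c - 3)).2 (by omega)
    have h2 := countLe_ctilSet_le_floor_mul ha hb hirra hirrb hsum hαγ hβγ (M := c - 2) (by omega)
    have h3 : ⌊(((c - 2 : ℤ) : ℝ) + 2) * γ⌋ < n := Int.floor_lt.2 (by push_cast; simpa using hcn)
    rw [show c - 2 - 1 = c - 3 by ring] at h2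
    omega
  simp only [Set.mem_insert_iff, Set.mem_singleton_iff]
  omega
end

section
/- Let α, β, γ be positive irrational numbers with α + β + γ = 1, max(α,β) < 1/2. Define E_β(m) = B̃_β(m) - B_β(m), where B̃_β = {b(n) - [b(n) ∈ B_α] : n ≥ 1} with b(n) = ⌊n/β⌋. Then E_β(m) = 1 if {(m+1)α} > 1 - α and {(m+1)β} > 1 - β, and E_β(m) = 0 otherwise. -/
open scoped Classical

/-!
Since `β < 1/2`, consecutive terms of `b(n) = ⌊n/β⌋` differ by at least `2`, so lowering some of
them by one keeps the sequence strictly increasing and positive. Hence the two counts up to `m`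
agree, except when `m + 1` is a term `b(n)` that lies in `B_α` and is therefore lowered to `m`.
Finally `k ∈ B_θ` iff some integer lies in `[kθ, kθ + θ)`, which for irrational `θ` says
`{kθ} > 1 - θ`.
-/

def posRange (f : ℕ → ℤ) : Set ℤ := {x | ∃ n : ℕ, 0 < n ∧ x = f n}

noncomputable def shiftDown (A : Set ℤ) (f : ℕ → ℤ) (n : ℕ) : ℤ := if f n ∈ A then f n - 1 else f n

lemma countLe_posRange_eq {f : ℕ → ℤ} (hf : StrictMono f) (hpos : ∀ n, 0 < n → 1 ≤ f n)
    {m : ℤ} {K : ℕ} (hK : ∀ n, 0 < n → (f n ≤ m ↔ n ≤ K)) :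
    countLe (posRange f) m = K := by
  have himage : (Finset.Icc 1 m).filter (· ∈ posRange f) = (Finset.Icc 1 K).image f := by
    ext x
    simp only [Finset.mem_filter, Finset.mem_Icc, Finset.mem_image]
    constructor
    · rintro ⟨⟨-, hxm⟩, n, hn, rfl⟩
      exact ⟨n, ⟨hn, (hK n hn).1 hxm⟩, rfl⟩
    · rintro ⟨n, ⟨hn, hnK⟩, rfl⟩
      exact ⟨⟨hpos n hn, (hK n hn).2 hnK⟩, n, hn, rfl⟩
  rw [countLe, himage, Finset.card_image_of_injective _ hf.injective, Nat.card_Icc]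
  omega

section shiftDown

variable {A : Set ℤ} {f : ℕ → ℤ}

lemma shiftDown_le_iff (n : ℕ) (m : ℤ) :
    shiftDown A f n ≤ m ↔ f n ≤ m ∨ (f n = m + 1 ∧ m + 1 ∈ A) := by
  unfold shiftDown
  split_ifs with h
  · constructor
    · intro hle
      by_cases heq : f n = m + 1
      · exact Or.inr ⟨heq, heq ▸ h⟩
      · exact Or.inl (by omega)
    · rintro (hle | ⟨heq, -⟩) <;> omega
  · exact (or_iff_left fun ⟨heq, hA⟩ => h (heq ▸ hA)).symm

lemma strictMono_shiftDown (hgap : ∀ a b, a < b → f a + 2 ≤ f b) : StrictMono (shiftDown A f) := by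
  intro a b hab
  have := hgap a b hab
  unfold shiftDown
  split_ifs <;> omega

lemma countLe_posRange_shiftDown_sub (hgap : ∀ a b, a < b → f a + 2 ≤ f b)
    (hpos : ∀ n, 0 < n → 2 ≤ f n) {m : ℤ} {K : ℕ} (hK : ∀ n, 0 < n → (f n ≤ m ↔ n ≤ K)) :
    (countLe (posRange (shiftDown A f)) m : ℤ) - countLe (posRange f) m =
      if m + 1 ∈ A ∧ m + 1 ∈ posRange f then 1 else 0 := by
  have hf : StrictMono f := fun a b hab => by linarith [hgap a b hab]
  have hg := strictMono_shiftDown (A := A) hgap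
  have hgpos : ∀ n, 0 < n → 1 ≤ shiftDown A f n := fun n hn => by
    have := hpos n hn
    unfold shiftDown
    split_ifs <;> omega
  rw [countLe_posRange_eq hf (fun n hn => by linarith [hpos n hn]) hK]
  split_ifs with hc
  · obtain ⟨hA, n₀, hn₀, hfn₀⟩ := hc
    have hn₀K : n₀ = K + 1 := by
      have hlt : K < n₀ := lt_of_not_ge fun h => by linarith [(hK n₀ hn₀).2 h]
      have hle : n₀ ≤ K + 1 := le_of_not_gt fun h => by
        linarith [hf h, (hK (K + 1) K.succ_pos).not.2 (by omega)]
      omega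
    subst hn₀K
    rw [hfn₀] at hA
    have hcount : countLe (posRange (shiftDown A f)) m = K + 1 := by
      refine countLe_posRange_eq hg hgpos fun n hn => ?_
      rw [shiftDown_le_iff, hK n hn, hfn₀, hf.injective.eq_iff]
      simp only [hA, and_true]
      omega
    rw [hcount]
    push_cast
    ring
  · have hcount : countLe (posRange (shiftDown A f)) m = K := by
      refine countLe_posRange_eq hg hgpos fun n hn => ?_
      rw [shiftDown_le_iff, hK n hn]
      exact or_iff_left fun ⟨hfn, hA⟩ => hc ⟨hA, n, hn, hfn.symm⟩
    rw [hcount]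
    ring

end shiftDown

lemma floor_div_eq_iff {θ : ℝ} (hθ : 0 < θ) (x : ℝ) (k : ℤ) :
    ⌊x / θ⌋ = k ↔ k * θ ≤ x ∧ x < (k + 1) * θ := by
  rw [Int.floor_eq_iff, le_div_iff₀ hθ, div_lt_iff₀ hθ]

lemma mem_beatty_iff {θ : ℝ} (hθ : Irrational θ) (hθ0 : 0 < θ) {k : ℤ} (hk : 0 < k) :
    k ∈ beatty θ ↔ 1 - θ < Int.fract (k * θ) := by
  have hirr : Irrational (k * θ) := hθ.intCast_mul hk.ne'
  simp only [beatty, Set.mem_ofPred_eq, eq_comm (a := k), floor_div_eq_iff hθ0, Int.fract]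
  constructor
  · rintro ⟨n, -, hlo, hhi⟩
    have hfloor : ⌊(k : ℝ) * θ⌋ < (n : ℤ) :=
      Int.floor_lt.2 (hlo.lt_of_ne fun h => hirr.ne_nat n h)
    have : (⌊(k : ℝ) * θ⌋ : ℝ) + 1 ≤ n := by exact_mod_cast hfloor
    linarith
  · intro hfract
    have hfloor : 0 ≤ ⌊(k : ℝ) * θ⌋ := Int.floor_nonneg.2 (by positivity)
    refine ⟨(⌊(k : ℝ) * θ⌋ + 1).toNat, by omega, ?_⟩
    rw [show (((⌊(k : ℝ) * θ⌋ + 1).toNat : ℕ) : ℝ) = ⌊(k : ℝ) * θ⌋ + 1 by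
      exact_mod_cast Int.toNat_of_nonneg (by omega)]
    constructor <;> linarith [Int.lt_floor_add_one ((k : ℝ) * θ)]

lemma floor_div_add_two_le {β : ℝ} (hβ0 : 0 < β) (hβ : β ≤ 1 / 2) {a b : ℕ} (hab : a < b) :
    ⌊(a : ℝ) / β⌋ + 2 ≤ ⌊(b : ℝ) / β⌋ := by
  have hstep : (a : ℝ) / β + 2 ≤ b / β := by
    have : (a : ℝ) + 1 ≤ b := by exact_mod_cast hab
    rw [div_add' _ _ _ hβ0.ne', div_le_div_iff_of_pos_right hβ0]
    nlinarith
  simpa using Int.floor_mono hstep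

lemma floor_div_le_iff {β : ℝ} (hβ : 0 < β) (n : ℕ) (m : ℤ) :
    ⌊(n : ℝ) / β⌋ ≤ m ↔ n < ⌈((m : ℝ) + 1) * β⌉₊ := by
  rw [Int.floor_le_iff, div_lt_iff₀ hβ, Nat.lt_ceil]

theorem Ebeta_formula_general (α β : ℝ)
    (hirra : Irrational α) (hirrb : Irrational β)
    (ha : 0 < α) (hb : 0 < β)
    (hmax : max α β < 1 / 2)
    (m : ℕ) :
    (countLe {x : ℤ | ∃ n : ℕ, 0 < n ∧ x = btil α β n} (m : ℤ) : ℤ) -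
        countLe (beatty β) (m : ℤ) =
      if 1 - α < Int.fract (((m : ℝ) + 1) * α) ∧ 1 - β < Int.fract (((m : ℝ) + 1) * β)
      then 1 else 0 := by
  have hβ : β ≤ 1 / 2 := by linarith [le_max_right α β]
  have hgap := fun a b (hab : a < b) => floor_div_add_two_le hb hβ hab
  have hcount := countLe_posRange_shiftDown_sub (A := beatty α) hgap
    (fun n hn => by simpa using hgap 0 n hn) (m := m) (K := ⌈((m : ℝ) + 1) * β⌉₊ - 1)
    (fun n hn => by rw [floor_div_le_iff hb]; push_cast; omega)
  have hmα := mem_beatty_iff hirra ha (k := (m : ℤ) + 1) (by omega)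
  have hmβ := mem_beatty_iff hirrb hb (k := (m : ℤ) + 1) (by omega)
  push_cast at hmα hmβ
  simp only [← hmα, ← hmβ]
  -- `btil α β = shiftDown (beatty α) (⌊· / β⌋)` and `beatty β = posRange (⌊· / β⌋)` definitionally
  exact hcount

theorem Ebeta_formula (α β γ : ℝ)
    (hirra : Irrational α) (hirrb : Irrational β) (hirrc : Irrational γ)
    (ha : 0 < α) (hb : 0 < β) (hc : 0 < γ) (hsum : α + β + γ = 1)
    (hmax : max α β < 1 / 2)
    (m : ℕ) (hm : 0 < m) :
    (countLe {x : ℤ | ∃ n : ℕ, 0 < n ∧ x = btil α β n} (m : ℤ) : ℤ) -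
        countLe (beatty β) (m : ℤ) =
      if 1 - α < Int.fract (((m : ℝ) + 1) * α) ∧ 1 - β < Int.fract (((m : ℝ) + 1) * β)
      then 1 else 0 :=
  Ebeta_formula_general α β hirra hirrb ha hb hmax m
end

section
/- Let α, γ be positive irrational numbers with 2α + γ = 1 (so α < 1/2). Let b(n) = ⌊n/α⌋, b̃(n) = b(n) - 1, B̃_β = {b̃(n) : n ≥ 1}, and B̃_γ = ℕ \ (B_α ∪ B̃_β). Then B_α, B̃_β, B̃_γ partition the positive integers. -/
open scoped Classical

theorem equal_density_partition (α γ : ℝ)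
    (hirra : Irrational α) (hirrc : Irrational γ)
    (ha : 0 < α) (hc : 0 < γ) (hsum : 2 * α + γ = 1)
    (Btβ : Set ℤ) (hBtβ : Btβ = {m : ℤ | ∃ n : ℕ, 0 < n ∧ m = ⌊(n : ℝ) / α⌋ - 1})
    (Btγ : Set ℤ) (hBtγ : Btγ = {m : ℤ | 0 < m ∧ m ∉ beatty α ∧ m ∉ Btβ}) :
    ∀ m : ℤ, 0 < m →
      ((m ∈ beatty α ∧ m ∉ Btβ ∧ m ∉ Btγ) ∨
       (m ∉ beatty α ∧ m ∈ Btβ ∧ m ∉ Btγ) ∨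
       (m ∉ beatty α ∧ m ∉ Btβ ∧ m ∈ Btγ)) := by
  intro m hm
  have hα2 : α < 1/2 := by linarith
  have hdis : ¬ (m ∈ beatty α ∧ m ∈ Btβ) := by
    rintro ⟨⟨n, hn, hne⟩, hb⟩
    rw [hBtβ] at hb
    obtain ⟨n', hn', he⟩ := hb
    rcases le_or_gt n' n with h | h
    · have hle : ⌊(n':ℝ)/α⌋ ≤ ⌊(n:ℝ)/α⌋ := by
        apply Int.floor_le_floor
        have : (n':ℝ) ≤ (n:ℝ) := by exact_mod_cast h
        gcongr
      omega
    · have h2 : (2:ℝ) < 1/α := by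
        rw [lt_div_iff₀ ha]; linarith
      have hcast : (n:ℝ) + 1 ≤ (n':ℝ) := by exact_mod_cast h
      have h1 : (n:ℝ)/α + 2 ≤ (n':ℝ)/α := by
        have : ((n:ℝ)+1)/α ≤ (n':ℝ)/α := by gcongr
        have : (n:ℝ)/α + 1/α ≤ (n':ℝ)/α := by
          rw [add_div] at this; linarith
        linarith
      have hge : ⌊(n:ℝ)/α⌋ + 2 ≤ ⌊(n':ℝ)/α⌋ := by
        calc ⌊(n:ℝ)/α⌋ + 2 = ⌊(n:ℝ)/α + (2:ℤ)⌋ := by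
              rw [Int.floor_add_intCast]
          _ ≤ ⌊(n':ℝ)/α⌋ := by
              apply Int.floor_le_floor; push_cast; linarith
      omega
  by_cases h1 : m ∈ beatty α
  · left
    refine ⟨h1, fun hb => hdis ⟨h1, hb⟩, ?_⟩
    rw [hBtγ]
    rintro ⟨-, h, -⟩
    exact h h1
  · by_cases h2 : m ∈ Btβ
    · right; left
      refine ⟨h1, h2, ?_⟩
      rw [hBtγ]
      rintro ⟨-, -, h⟩
      exact h h2
    · right; right
      refine ⟨h1, h2, ?_⟩
      rw [hBtγ]
      exact ⟨hm, h1, h2⟩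
end

section
/- Let α, β, γ be positive irrational numbers with α + β + γ = 1 such that rα + sβ = 1 for some positive integers r, s. If moreover max(α, β) < 1/2, then, with B̃_γ = ℕ \ (B_α ∪ B_β) enumerated increasingly as (c̃(n)), one has c(n) - c̃(n) ∈ {0, 1, 2} for all n, where c(n) = ⌊n/γ⌋. -/
open scoped Classical

/-!
An element `x` of both `B_α` and `B_β`, say `x = ⌊p/α⌋ = ⌊q/β⌋`, would make `r p + s q - x`
an integer strictly between `0` and `1`; so the two Beatty sets are disjoint, and the number of
elements of `B̃_γ` in `[1, m]` is `m - ⌊(m+1)α⌋ - ⌊(m+1)β⌋ = (m+1)γ - 1 + {(m+1)α} + {(m+1)β}`.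
For every integer `k` the integer `r{kα} + s{kβ}` is less than `r + s`, which with `r ≤ s`
gives `s({kα} + {kβ}) ≤ 2s - 1 < s(1 + 2γ)`, the last step using `α < 1/2`. Hence that count
lies in `[(m+1)γ - 1, (m+3)γ)`, and comparing it with `n` at `m = c(n)` and `m = c(n) - 3`
places `c̃(n)` in `(c(n) - 3, c(n)]`.
-/

open Int

def beattyCompl (α β : ℝ) : Set ℤ := {m | 0 < m ∧ m ∉ beatty α ∧ m ∉ beatty β}

theorem countLe_union {S T : Set ℤ} (h : Disjoint S T) (m : ℤ) :
    countLe (S ∪ T) m = countLe S m + countLe T m := by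
  unfold countLe
  simp only [Set.mem_union]
  rw [Finset.filter_or, Finset.card_union_of_disjoint
    (Finset.disjoint_filter_filter' _ _ (by simpa [Pi.disjoint_iff] using Set.disjoint_left.1 h))]

theorem countLe_add_countLe_compl (S : Set ℤ) (m : ℤ) :
    countLe S m + countLe Sᶜ m = m.toNat := by
  unfold countLe
  simp only [Set.mem_compl_iff]
  rw [Finset.card_filter_add_card_filter_not, Int.card_Icc, add_sub_cancel_right]

theorem countLe_congr {S T : Set ℤ} (h : ∀ k, 0 < k → (k ∈ S ↔ k ∈ T)) (m : ℤ) :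
    countLe S m = countLe T m := by
  unfold countLe
  congr 1
  exact Finset.filter_congr fun k hk => h k (zero_lt_one.trans_le (Finset.mem_Icc.1 hk).1)

theorem strictMono_floor_div {θ : ℝ} (hθ0 : 0 < θ) (hθ1 : θ ≤ 1) :
    StrictMono fun n : ℕ => ⌊(n : ℝ) / θ⌋ := by
  refine strictMono_nat_of_lt_succ fun n => ?_
  have h : (n : ℝ) / θ + 1 ≤ ((n + 1 : ℕ) : ℝ) / θ := by
    rw [Nat.cast_succ, add_div, add_le_add_iff_left, le_div_iff₀ hθ0, one_mul]
    exact hθ1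
  calc ⌊(n : ℝ) / θ⌋ < ⌊(n : ℝ) / θ⌋ + 1 := lt_add_one _
    _ = ⌊(n : ℝ) / θ + 1⌋ := (floor_add_one _).symm
    _ ≤ _ := floor_mono h

theorem countLe_beatty {θ : ℝ} (hθ : Irrational θ) (hθ0 : 0 < θ) (hθ1 : θ < 1) {m : ℤ}
    (hm : 0 ≤ m) : (countLe (beatty θ) m : ℤ) = ⌊(m + 1) * θ⌋ := by
  have hx : 0 ≤ ((m : ℝ) + 1) * θ := by positivity
  have himage : (Finset.Icc 1 m).filter (· ∈ beatty θ) =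
      (Finset.Icc 1 ⌊((m : ℝ) + 1) * θ⌋₊).image fun n : ℕ => ⌊(n : ℝ) / θ⌋ := by
    have hirr : Irrational (((m : ℝ) + 1) * θ) := by
      exact_mod_cast hθ.intCast_mul (show m + 1 ≠ 0 by omega)
    have hle : ∀ n : ℕ, ⌊(n : ℝ) / θ⌋ ≤ m ↔ n ≤ ⌊((m : ℝ) + 1) * θ⌋₊ := fun n => by
      rw [Nat.le_floor_iff hx, ← Int.lt_add_one_iff, Int.floor_lt, div_lt_iff₀ hθ0, cast_add,
        cast_one]
      exact ⟨le_of_lt, fun h => h.lt_of_ne (hirr.ne_nat n).symm⟩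
    have hpos : ∀ n : ℕ, 0 < n → 1 ≤ ⌊(n : ℝ) / θ⌋ := fun n hn => by
      rw [le_floor, cast_one, le_div_iff₀ hθ0, one_mul]
      exact hθ1.le.trans (by exact_mod_cast hn)
    ext k
    simp only [Finset.mem_filter, Finset.mem_Icc, Finset.mem_image]
    constructor
    · rintro ⟨⟨-, hkm⟩, n, hn, rfl⟩
      exact ⟨n, ⟨hn, (hle n).1 hkm⟩, rfl⟩
    · rintro ⟨n, ⟨hn, hnm⟩, rfl⟩
      exact ⟨⟨hpos n hn, (hle n).2 hnm⟩, n, hn, rfl⟩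
  rw [countLe, himage, Finset.card_image_of_injective _ (strictMono_floor_div hθ0 hθ1.le).injective,
    Nat.card_Icc, add_tsub_cancel_right, natCast_floor_eq_floor hx]

theorem exists_of_mem_beatty {θ : ℝ} (hθ : 0 < θ) {x : ℤ} (hx : x ∈ beatty θ) :
    ∃ p : ℕ, 0 < p ∧ x * θ ≤ p ∧ p < (x + 1) * θ := by
  obtain ⟨p, hp, rfl⟩ := hx
  exact ⟨p, hp, (le_div_iff₀ hθ).1 (floor_le _), (div_lt_iff₀ hθ).1 (lt_floor_add_one _)⟩

theorem disjoint_beatty_s17 {α β : ℝ} (hα : Irrational α) (hα0 : 0 < α) (hβ0 : 0 < β) {r s : ℕ}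
    (hr : 0 < r) (hrs : (r : ℝ) * α + s * β = 1) : Disjoint (beatty α) (beatty β) := by
  refine Set.disjoint_left.2 fun x hxα hxβ => ?_
  obtain ⟨p, hp, hpl, hpu⟩ := exists_of_mem_beatty hα0 hxα
  obtain ⟨q, -, hql, hqu⟩ := exists_of_mem_beatty hβ0 hxβ
  have hpx : x * α < p := by
    refine hpl.lt_of_ne fun h => ?_
    rcases eq_or_ne x 0 with rfl | hx0
    · rw [Int.cast_zero, zero_mul] at h
      exact hp.ne' (by exact_mod_cast h.symm)
    · exact (hα.intCast_mul hx0).ne_nat p h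
  have hz : ((r * p + s * q - x : ℤ) : ℝ) = r * (p - x * α) + s * (q - x * β) := by
    push_cast; linear_combination x * hrs
  have hr' : (0 : ℝ) < r := by exact_mod_cast hr
  have h0 : (0 : ℝ) < ((r * p + s * q - x : ℤ) : ℝ) := by rw [hz]; nlinarith
  have h1 : ((r * p + s * q - x : ℤ) : ℝ) < 1 := by rw [hz, ← hrs]; nlinarith
  have h0' : 0 < r * p + s * q - x := by exact_mod_cast h0
  have h1' : r * p + s * q - x < 1 := by exact_mod_cast h1
  omega

theorem natCast_mul_fract_add_natCast_mul_fract_le {α β : ℝ} {r s : ℕ} (hr : 0 < r)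
    (hrs : (r : ℝ) * α + s * β = 1) (k : ℤ) :
    r * fract (k * α) + s * fract (k * β) ≤ r + s - 1 := by
  have hJ : ((k - r * ⌊k * α⌋ - s * ⌊k * β⌋ : ℤ) : ℝ) = r * fract (k * α) + s * fract (k * β) := by
    simp only [fract]; push_cast; linear_combination (-k : ℝ) * hrs
  have hr' : (0 : ℝ) < r := by exact_mod_cast hr
  have hlt : ((k - r * ⌊k * α⌋ - s * ⌊k * β⌋ : ℤ) : ℝ) < ((r + s : ℤ) : ℝ) := by
    rw [hJ]; push_cast
    nlinarith [fract_lt_one (k * α), fract_lt_one (k * β), fract_nonneg (k * β),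
      (Nat.cast_nonneg s : (0 : ℝ) ≤ s)]
  have hle : k - r * ⌊k * α⌋ - s * ⌊k * β⌋ ≤ r + s - 1 := by
    have := Int.cast_lt.1 hlt; omega
  rw [← hJ]; exact_mod_cast hle

theorem fract_add_fract_lt_of_le {α β γ : ℝ} {r s : ℕ} (hr : 0 < r) (hrs_le : r ≤ s)
    (hrs : (r : ℝ) * α + s * β = 1) (hα : α < 1 / 2) (hγ : 0 < γ) (hsum : α + β + γ = 1)
    (k : ℤ) : fract (k * α) + fract (k * β) < 1 + 2 * γ := by
  have hJ := natCast_mul_fract_add_natCast_mul_fract_le hr hrs k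
  have hsr : (r : ℝ) ≤ s := by exact_mod_cast hrs_le
  have hs_mul : s * (fract (k * α) + fract (k * β)) ≤ 2 * s - 1 := by
    nlinarith [fract_lt_one (k * α)]
  have hs_lt : (s : ℝ) - 1 < 2 * s * γ := by
    rcases hrs_le.lt_or_eq with hlt | rfl
    · have h1 : (r : ℝ) + 1 ≤ s := by exact_mod_cast hlt
      have h2 : 2 * s * γ = 2 * s - 2 - 2 * (s - r) * α := by
        linear_combination -2 * hrs + 2 * (s : ℝ) * hsum
      have h3 : (s - r) * (2 * α) < (s - r) * 1 := mul_lt_mul_of_pos_left (by linarith) (by linarith)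
      have h4 : (1 : ℝ) ≤ r := by exact_mod_cast hr
      linarith
    · have h : (r : ℝ) * γ = r - 1 := by linear_combination (r : ℝ) * hsum - hrs
      have : (0 : ℝ) < r * γ := mul_pos (by exact_mod_cast hr) hγ
      linarith
  have hs0 : (0 : ℝ) < s := by exact_mod_cast hr.trans_le hrs_le
  nlinarith

theorem fract_add_fract_lt {α β γ : ℝ} {r s : ℕ} (hr : 0 < r) (hs : 0 < s)
    (hrs : (r : ℝ) * α + s * β = 1) (hα : α < 1 / 2) (hβ : β < 1 / 2) (hγ : 0 < γ)
    (hsum : α + β + γ = 1) (k : ℤ) : fract (k * α) + fract (k * β) < 1 + 2 * γ := by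
  rcases le_total r s with h | h
  · exact fract_add_fract_lt_of_le hr h hrs hα hγ hsum k
  · rw [add_comm]
    exact fract_add_fract_lt_of_le hs h (by linarith) hβ hγ (by linarith) k

theorem countLe_beattyCompl {α β : ℝ} (hα : Irrational α) (hβ : Irrational β) (hα0 : 0 < α)
    (hβ0 : 0 < β) (hα1 : α < 1) (hβ1 : β < 1) (hdisj : Disjoint (beatty α) (beatty β)) {m : ℤ}
    (hm : 0 ≤ m) :
    (countLe (beattyCompl α β) m : ℤ) = m - ⌊(m + 1) * α⌋ - ⌊(m + 1) * β⌋ := by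
  have hcompl : countLe (beattyCompl α β) m = countLe (beatty α ∪ beatty β)ᶜ m :=
    countLe_congr (fun k hk => by simp [beattyCompl, hk]) m
  have hsplit := countLe_add_countLe_compl (beatty α ∪ beatty β) m
  rw [countLe_union hdisj] at hsplit
  rw [hcompl, ← countLe_beatty hα hα0 hα1 hm, ← countLe_beatty hβ hβ0 hβ1 hm]
  omega

theorem sub_one_le_countLe_beattyCompl {α β γ : ℝ} (hα : Irrational α) (hβ : Irrational β)
    (hα0 : 0 < α) (hβ0 : 0 < β) (hα1 : α < 1) (hβ1 : β < 1)
    (hdisj : Disjoint (beatty α) (beatty β)) (hsum : α + β + γ = 1) {m : ℤ} (hm : 0 ≤ m) :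
    (m + 1) * γ - 1 ≤ countLe (beattyCompl α β) m := by
  have h := countLe_beattyCompl hα hβ hα0 hβ0 hα1 hβ1 hdisj hm
  have h' : (countLe (beattyCompl α β) m : ℝ) = m - ⌊(m + 1) * α⌋ - ⌊(m + 1) * β⌋ := by
    exact_mod_cast h
  have hγ : ((m : ℝ) + 1) * γ = m + 1 - (m + 1) * α - (m + 1) * β := by
    linear_combination ((m : ℝ) + 1) * hsum
  rw [h']
  linarith [floor_le (((m : ℝ) + 1) * α), floor_le (((m : ℝ) + 1) * β)]

theorem countLe_beattyCompl_lt {α β γ : ℝ} (hα : Irrational α) (hβ : Irrational β)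
    (hα0 : 0 < α) (hβ0 : 0 < β) (hα2 : α < 1 / 2) (hβ2 : β < 1 / 2) (hγ : 0 < γ)
    (hsum : α + β + γ = 1) {r s : ℕ} (hr : 0 < r) (hs : 0 < s) (hrs : (r : ℝ) * α + s * β = 1)
    {m : ℤ} (hm : 0 ≤ m) :
    countLe (beattyCompl α β) m < (m + 3) * γ := by
  have h := countLe_beattyCompl hα hβ hα0 hβ0 (by linarith) (by linarith)
    (disjoint_beatty_s17 hα hα0 hβ0 hr hrs) hm
  have h' : (countLe (beattyCompl α β) m : ℝ) = m - ⌊(m + 1) * α⌋ - ⌊(m + 1) * β⌋ := by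
    exact_mod_cast h
  have hfract : fract ((m + 1) * α) + fract ((m + 1) * β) < 1 + 2 * γ := by
    exact_mod_cast fract_add_fract_lt hr hs hrs hα2 hβ2 hγ hsum (m + 1)
  have hγ : ((m : ℝ) + 1) * γ = m + 1 - (m + 1) * α - (m + 1) * β := by
    linear_combination ((m : ℝ) + 1) * hsum
  rw [h']
  linarith [floor_add_fract (((m : ℝ) + 1) * α), floor_add_fract (((m : ℝ) + 1) * β)]

theorem le_iff_le_countLe {S : Set ℤ} (hS : ∀ x ∈ S, 0 < x) {e : ℕ → ℤ}
    (hmono : StrictMonoOn e (Set.Ioi 0)) (hmem : ∀ n, 0 < n → e n ∈ S)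
    (hsurj : ∀ x ∈ S, ∃ n, 0 < n ∧ e n = x) {n : ℕ} (hn : 0 < n) (x : ℤ) :
    e n ≤ x ↔ n ≤ countLe S x := by
  have hle : ∀ {i j : ℕ}, 0 < i → 0 < j → (e i ≤ e j ↔ i ≤ j) := fun hi hj => hmono.le_iff_le hi hj
  constructor
  · intro hx
    have hmaps : Set.MapsTo e (Finset.Icc 1 n) ((Finset.Icc 1 x).filter (· ∈ S)) := by
      intro j hj
      obtain ⟨hj1, hjn⟩ := Finset.mem_Icc.1 hj
      exact Finset.mem_filter.2
        ⟨Finset.mem_Icc.2 ⟨hS _ (hmem j hj1), ((hle hj1 hn).2 hjn).trans hx⟩, hmem j hj1⟩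
    have := Finset.card_le_card_of_injOn e hmaps
      (hmono.injOn.mono fun j hj => (Finset.mem_Icc.1 hj).1)
    simpa [countLe] using this
  · intro hcount
    by_contra! hx
    have hsub : (Finset.Icc 1 x).filter (· ∈ S) ⊆ (Finset.Ico 1 n).image e := by
      intro k hk
      obtain ⟨hkx, hkS⟩ := Finset.mem_filter.1 hk
      obtain ⟨j, hj, rfl⟩ := hsurj k hkS
      have hjn : j < n := by
        by_contra! hnj
        exact ((Finset.mem_Icc.1 hkx).2.trans_lt hx).not_ge ((hle hn hj).2 hnj)
      exact Finset.mem_image.2 ⟨j, Finset.mem_Ico.2 ⟨hj, hjn⟩, rfl⟩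
    have := (Finset.card_le_card hsub).trans Finset.card_image_le
    simp only [countLe, Nat.card_Ico] at this hcount
    omega

theorem thm1_error_special_general (α β γ : ℝ)
    (hirra : Irrational α) (hirrb : Irrational β)
    (ha : 0 < α) (hb : 0 < β) (hc : 0 < γ) (hsum : α + β + γ = 1)
    (hdisj : ∃ r s : ℕ, 0 < r ∧ 0 < s ∧ (r : ℝ) * α + (s : ℝ) * β = 1)
    (hmax : max α β < 1 / 2)
    (Btγ : Set ℤ) (hBtγ : Btγ = {m : ℤ | 0 < m ∧ m ∉ beatty α ∧ m ∉ beatty β})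
    (ct : ℕ → ℤ)
    (hmono : ∀ n m : ℕ, 0 < n → n < m → ct n < ct m)
    (hmem : ∀ n : ℕ, 0 < n → ct n ∈ Btγ)
    (hsurj : ∀ x ∈ Btγ, ∃ n : ℕ, 0 < n ∧ ct n = x) :
    ∀ n : ℕ, 0 < n → ⌊(n : ℝ) / γ⌋ - ct n ∈ ({0, 1, 2} : Set ℤ) := by
  intro n hn
  obtain ⟨r, s, hr, hs, hrs⟩ := hdisj
  have hα2 : α < 1 / 2 := (le_max_left α β).trans_lt hmax
  have hβ2 : β < 1 / 2 := (le_max_right α β).trans_lt hmax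
  subst hBtγ
  have hct : ∀ x, ct n ≤ x ↔ n ≤ countLe (beattyCompl α β) x :=
    le_iff_le_countLe (fun _ hx => hx.1) (fun i hi j _ hij => hmono i j hi hij) hmem hsurj hn
  set c := ⌊(n : ℝ) / γ⌋
  have hcn : c * γ ≤ n := (le_div_iff₀ hc).1 (floor_le _)
  have hnc : n < (c + 1) * γ := (div_lt_iff₀ hc).1 (lt_floor_add_one _)
  have hupper : ct n ≤ c := by
    have hle := sub_one_le_countLe_beattyCompl hirra hirrb ha hb (by linarith) (by linarith)
      (disjoint_beatty_s17 hirra ha hb hr hrs) hsum (floor_nonneg.2 (by positivity) : 0 ≤ c)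
    have hlt : (n : ℝ) < countLe (beattyCompl α β) c + 1 := by linarith
    exact (hct c).2 (Nat.lt_succ_iff.1 (by exact_mod_cast hlt))
  have hlower : c - 3 < ct n := by
    by_contra! h
    have hc3 : 0 ≤ c - 3 := by have := (hmem n hn).1; omega
    have hlt := countLe_beattyCompl_lt hirra hirrb ha hb hα2 hβ2 hc hsum hr hs hrs hc3
    have hle : (n : ℝ) ≤ countLe (beattyCompl α β) (c - 3) := by exact_mod_cast (hct _).1 h
    push_cast at hlt
    linarith
  simp only [Set.mem_insert_iff, Set.mem_singleton_iff]
  omega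

theorem thm1_error_special (α β γ : ℝ)
    (hirra : Irrational α) (hirrb : Irrational β) (hirrc : Irrational γ)
    (ha : 0 < α) (hb : 0 < β) (hc : 0 < γ) (hsum : α + β + γ = 1)
    (hdisj : ∃ r s : ℕ, 0 < r ∧ 0 < s ∧ (r : ℝ) * α + (s : ℝ) * β = 1)
    (hmax : max α β < 1 / 2)
    (Btγ : Set ℤ) (hBtγ : Btγ = {m : ℤ | 0 < m ∧ m ∉ beatty α ∧ m ∉ beatty β})
    (ct : ℕ → ℤ)
    (hmono : ∀ n m : ℕ, 0 < n → n < m → ct n < ct m)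
    (hmem : ∀ n : ℕ, 0 < n → ct n ∈ Btγ)
    (hsurj : ∀ x ∈ Btγ, ∃ n : ℕ, 0 < n ∧ ct n = x) :
    ∀ n : ℕ, 0 < n → ⌊(n : ℝ) / γ⌋ - ct n ∈ ({0, 1, 2} : Set ℤ) :=
  thm1_error_special_general α β γ hirra hirrb ha hb hc hsum hdisj hmax Btγ hBtγ ct hmono hmem hsurj
end

section
/- Let α, β, γ be positive irrational numbers with α + β + γ = 1 such that α > 1/3 and 1, α, β are linearly independent over ℚ. Then there is no partition ℕ = B_α ∪ B̃_β ∪ B̃_γ where B̃_β = (b̃(n)) and B̃_γ = (c̃(n)) are strictly increasing sequences satisfying |b̃(n) - ⌊n/β⌋| ≤ 1 and |c̃(n) - ⌊n/γ⌋| ≤ 1 for all n. -/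
open scoped Classical

/-!
By Kronecker's theorem there is an `M ≥ 1` with `{Mα}` just below `1` and `{Mβ}` just below
`1 - β`. Then `{Mα} + {Mβ} + {Mγ} = 2`, and neither `⌊Mβ⌋` nor `⌊Mγ⌋` moves when `M` becomes
`M + 1`, so `⌊Mα⌋ + ⌊(M + 1)β⌋ + ⌊(M + 1)γ⌋ = M - 2`. But `B_α` has at most `⌊Mα⌋` elements
in `[1, M)`, and a sequence within `1` of `⌊n/β⌋` at most `⌊(M + 1)β⌋`, so the three sets cannot
cover the `M - 1` integers of `[1, M)`.

Kronecker's theorem is proved with Weyl sums: along the orbit `M ↦ (Mα, Mβ)` a trigonometric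
polynomial averages to its constant term. For `F(x) = |∑_{a<K} e(ax)|⁴` the constant term of
`F(x)F(y)` is the square of the additive energy of `{0, …, K-1}`, of order `K⁶`, whereas
`F(x)F(y) ≤ K⁴/(2δ)⁴` as soon as `x` or `y` is `δ`-far from `ℤ`.
-/

open Finset Real FourierTransform

theorem le_of_forall_nat_mul_le_mul_add {a b E : ℝ} (h : ∀ N : ℕ, N * a ≤ N * b + E) : a ≤ b := by
  by_contra! hab
  obtain ⟨N, hN⟩ := exists_nat_gt (E / (a - b))
  rw [div_lt_iff₀ (sub_pos.2 hab)] at hN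
  linarith [h N]

theorem fourierChar_eq_one_iff {x : ℝ} : 𝐞 x = 1 ↔ ∃ n : ℤ, x = n := by
  rw [fourierChar_apply', Circle.exp_eq_one]
  refine exists_congr fun n => ?_
  constructor <;> intro h
  · nlinarith [pi_pos]
  · rw [h]; ring

theorem norm_geom_sum_Ico_le {z : ℂ} (hz : ‖z‖ = 1) (hz1 : z ≠ 1) {m n : ℕ} (hmn : m ≤ n) :
    ‖∑ i ∈ Ico m n, z ^ i‖ ≤ 2 / ‖z - 1‖ := by
  rw [geom_sum_Ico hz1 hmn, norm_div]
  gcongr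
  calc ‖z ^ n - z ^ m‖ ≤ ‖z ^ n‖ + ‖z ^ m‖ := norm_sub_le _ _
    _ = 2 := by rw [norm_pow, norm_pow, hz]; norm_num

theorem four_mul_abs_sub_round_le_norm_fourierChar_sub_one (x : ℝ) :
    4 * |x - round x| ≤ ‖(𝐞 x : ℂ) - 1‖ := by
  -- `‖e(s) - 1‖ = 2 |sin πs|`, and Jordan's inequality gives `|sin πs| ≥ 2 |s|` for `|s| ≤ 1/2`.
  set s := x - round x
  have hs : |π * s| ≤ π / 2 := by
    rw [abs_mul, abs_of_pos pi_pos]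
    nlinarith [abs_sub_round x, pi_pos]
  have hx : 𝐞 x = 𝐞 s := by
    rw [show x = s + (round x : ℤ) by ring, AddChar.map_add_eq_mul,
      fourierChar_eq_one_iff.2 ⟨_, rfl⟩, mul_one]
  rw [hx, fourierChar_apply, mul_comm _ Complex.I, Complex.norm_exp_I_mul_ofReal_sub_one, norm_mul,
    Real.norm_two, Real.norm_eq_abs, show 2 * π * s / 2 = π * s by ring]
  have := mul_abs_le_abs_sin hs
  rw [abs_mul, abs_of_pos pi_pos] at this
  field_simp at this
  linarith

theorem norm_sum_range_fourierChar_mul_le {x δ : ℝ} (hδ : 0 < δ) (hx : ∀ j : ℤ, δ ≤ |x - j|)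
    (K : ℕ) : ‖∑ a ∈ range K, (𝐞 (a * x) : ℂ)‖ ≤ 1 / (2 * δ) := by
  have hne : (𝐞 x : ℂ) ≠ 1 := by
    rw [Ne, Circle.coe_eq_one, fourierChar_eq_one_iff]
    rintro ⟨n, rfl⟩
    simpa using (hδ.trans_le (hx n))
  have hpow (a : ℕ) : (𝐞 (a * x) : ℂ) = (𝐞 x : ℂ) ^ a := by
    rw [← nsmul_eq_mul, AddChar.map_nsmul_eq_pow, Circle.coe_pow]
  calc ‖∑ a ∈ range K, (𝐞 (a * x) : ℂ)‖ ≤ 2 / ‖(𝐞 x : ℂ) - 1‖ := by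
        simp_rw [hpow, range_eq_Ico]
        exact norm_geom_sum_Ico_le (Circle.norm_coe _) hne K.zero_le
    _ ≤ 2 / (4 * δ) := by
        gcongr
        exact (mul_le_mul_of_nonneg_left (hx (round x)) (by norm_num)).trans
          (four_mul_abs_sub_round_le_norm_fourierChar_sub_one x)
    _ = 1 / (2 * δ) := by field_simp; norm_num

theorem norm_sum_fourierChar_mul_le_card (s : Finset ℕ) (x : ℝ) :
    ‖∑ a ∈ s, (𝐞 (a * x) : ℂ)‖ ≤ #s :=
  (norm_sum_le _ _).trans (by simp [Circle.norm_coe])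

theorem sum_fourierChar_mul_sum_fourierChar {ι κ : Type*} (s : Finset ι) (t : Finset κ)
    (f : ι → ℝ) (g : κ → ℝ) :
    (∑ i ∈ s, (𝐞 (f i) : ℂ)) * ∑ j ∈ t, (𝐞 (g j) : ℂ) = ∑ p ∈ s ×ˢ t, (𝐞 (f p.1 + g p.2) : ℂ) := by
  simp_rw [sum_mul_sum, sum_product, AddChar.map_add_eq_mul, Circle.coe_mul]

def quadFreq (q : (ℕ × ℕ) × (ℕ × ℕ)) : ℤ := q.1.1 + q.2.1 - (q.1.2 + q.2.2)

theorem addEnergy_eq_card_filter_quadFreq (s : Finset ℕ) :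
    s.addEnergy s = #{q ∈ (s ×ˢ s) ×ˢ (s ×ˢ s) | quadFreq q = 0} := by
  simp only [addEnergy, quadFreq]
  congr 1
  refine filter_congr fun q _ => ?_
  omega

theorem ofReal_norm_sum_fourierChar_mul_pow_four (s : Finset ℕ) (x : ℝ) :
    ((‖∑ a ∈ s, (𝐞 (a * x) : ℂ)‖ ^ 4 : ℝ) : ℂ) =
      ∑ q ∈ (s ×ˢ s) ×ˢ (s ×ˢ s), (𝐞 (quadFreq q * x) : ℂ) := by
  have hsq : ((‖∑ a ∈ s, (𝐞 (a * x) : ℂ)‖ ^ 2 : ℝ) : ℂ) =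
      ∑ p ∈ s ×ˢ s, (𝐞 (p.1 * x + -(p.2 * x)) : ℂ) := by
    rw [← Complex.normSq_eq_norm_sq, ← Complex.mul_conj, map_sum]
    simp only [Circle.starRingEnd_addChar]
    exact sum_fourierChar_mul_sum_fourierChar _ _ _ _
  rw [show (4 : ℕ) = 2 * 2 from rfl, pow_mul, Complex.ofReal_pow, hsq, sq,
    sum_fourierChar_mul_sum_fourierChar]
  refine sum_congr rfl fun q _ => ?_
  congr 2
  simp only [quadFreq]
  push_cast
  ring

theorem exists_forall_norm_sum_orbit_sub_le {α β : ℝ}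
    (hαβ : ∀ A B n : ℤ, A * α + B * β = n → A = 0 ∧ B = 0) (x₀ y₀ : ℝ) {ι : Type*}
    (s : Finset ι) (A B : ι → ℤ) :
    ∃ E, ∀ N : ℕ, ‖∑ M ∈ Icc 1 N, ∑ i ∈ s, (𝐞 (A i * (M * α - x₀) + B i * (M * β - y₀)) : ℂ)
      - N * #{i ∈ s | A i = 0 ∧ B i = 0}‖ ≤ E := by
  set θ : ι → ℝ := fun i => A i * α + B i * β
  refine ⟨∑ i ∈ s with ¬(A i = 0 ∧ B i = 0), 2 / ‖(𝐞 (θ i) : ℂ) - 1‖, fun N => ?_⟩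
  have hterm (i : ι) (M : ℕ) : (𝐞 (A i * (M * α - x₀) + B i * (M * β - y₀)) : ℂ) =
      𝐞 (-(A i * x₀ + B i * y₀)) * (𝐞 (θ i) : ℂ) ^ M := by
    rw [← Circle.coe_pow, ← AddChar.map_nsmul_eq_pow, ← Circle.coe_mul,
      ← AddChar.map_add_eq_mul, nsmul_eq_mul]
    congr 2
    ring
  have hconst (i : ι) (hi : A i = 0 ∧ B i = 0) :
      ∑ M ∈ Icc 1 N, (𝐞 (A i * (M * α - x₀) + B i * (M * β - y₀)) : ℂ) = N := by
    simp [hi]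
  rw [sum_comm, ← sum_filter_add_sum_filter_not s (fun i => A i = 0 ∧ B i = 0),
    sum_congr rfl fun i hi => hconst i (mem_filter.1 hi).2, sum_const, nsmul_eq_mul, mul_comm,
    add_sub_cancel_left]
  refine (norm_sum_le _ _).trans (sum_le_sum fun i hi => ?_)
  have hθ : (𝐞 (θ i) : ℂ) ≠ 1 := by
    rw [Ne, Circle.coe_eq_one, fourierChar_eq_one_iff]
    rintro ⟨n, hn⟩
    exact (mem_filter.1 hi).2 (hαβ _ _ n hn)
  rw [sum_congr rfl fun M _ => hterm i M, ← mul_sum, norm_mul, Circle.norm_coe, one_mul,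
    ← Finset.Ico_add_one_right_eq_Icc]
  exact norm_geom_sum_Ico_le (Circle.norm_coe _) hθ (by omega)

open Pointwise in
theorem pow_three_le_two_mul_addEnergy_range (K : ℕ) :
    K ^ 3 ≤ 2 * (range K).addEnergy (range K) := by
  have hsum : #(range K + range K) ≤ 2 * K := by
    calc #(range K + range K) ≤ #(range (2 * K)) := by
          refine card_le_card (add_subset_iff.2 fun a ha b hb => ?_)
          simp only [mem_range] at *
          omega
      _ = 2 * K := card_range _
  have := (le_card_add_mul_addEnergy (range K) (range K)).trans (Nat.mul_le_mul_right _ hsum)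
  rw [card_range] at this
  rcases K.eq_zero_or_pos with rfl | hK
  · simp
  · nlinarith

theorem addEnergy_sq_le_of_forall_orbit_le {α β : ℝ}
    (hαβ : ∀ A B n : ℤ, A * α + B * β = n → A = 0 ∧ B = 0) (x₀ y₀ : ℝ) (s : Finset ℕ) {C : ℝ}
    (hC : ∀ M : ℕ, 1 ≤ M → ‖∑ a ∈ s, (𝐞 (a * (M * α - x₀)) : ℂ)‖ ^ 4 *
      ‖∑ a ∈ s, (𝐞 (a * (M * β - y₀)) : ℂ)‖ ^ 4 ≤ C) :
    (s.addEnergy s : ℝ) ^ 2 ≤ C := by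
  set Q := (s ×ˢ s) ×ˢ (s ×ˢ s)
  obtain ⟨E, hE⟩ := exists_forall_norm_sum_orbit_sub_le hαβ x₀ y₀ (Q ×ˢ Q)
    (fun i => quadFreq i.1) (fun i => quadFreq i.2)
  have hconst : #{i ∈ Q ×ˢ Q | quadFreq i.1 = 0 ∧ quadFreq i.2 = 0} = s.addEnergy s ^ 2 := by
    rw [filter_product (fun q => quadFreq q = 0) (fun q => quadFreq q = 0), card_product,
      addEnergy_eq_card_filter_quadFreq, sq]
  have hexpand (M : ℕ) : ∑ i ∈ Q ×ˢ Q,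
      (𝐞 (quadFreq i.1 * (M * α - x₀) + quadFreq i.2 * (M * β - y₀)) : ℂ) =
      ((‖∑ a ∈ s, (𝐞 (a * (M * α - x₀)) : ℂ)‖ ^ 4 *
        ‖∑ a ∈ s, (𝐞 (a * (M * β - y₀)) : ℂ)‖ ^ 4 : ℝ) : ℂ) := by
    rw [Complex.ofReal_mul, ofReal_norm_sum_fourierChar_mul_pow_four,
      ofReal_norm_sum_fourierChar_mul_pow_four, sum_fourierChar_mul_sum_fourierChar]
  refine le_of_forall_nat_mul_le_mul_add (E := E) fun N => ?_
  have h := hE N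
  simp only [hexpand, hconst, ← Complex.ofReal_sum] at h
  rw [show (N : ℂ) * (((s.addEnergy s ^ 2 : ℕ)) : ℂ) = ((N * (s.addEnergy s : ℝ) ^ 2 : ℝ) : ℂ) by
      push_cast; ring, ← Complex.ofReal_sub, Complex.norm_real, Real.norm_eq_abs] at h
  have hup := sum_le_sum fun M (hM : M ∈ Icc 1 N) => hC M (mem_Icc.1 hM).1
  rw [sum_const, Nat.card_Icc, add_tsub_cancel_right, nsmul_eq_mul] at hup
  linarith [(abs_le.1 h).1]

theorem exists_nat_abs_sub_int_lt_of_no_int_relation {α β : ℝ}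
    (hαβ : ∀ A B n : ℤ, A * α + B * β = n → A = 0 ∧ B = 0) (x₀ y₀ : ℝ) {δ : ℝ} (hδ : 0 < δ) :
    ∃ M : ℕ, 1 ≤ M ∧ (∃ j : ℤ, |M * α - x₀ - j| < δ) ∧ ∃ k : ℤ, |M * β - y₀ - k| < δ := by
  by_contra! hfar
  set F : ℕ → ℝ → ℝ := fun K x => ‖∑ a ∈ range K, (𝐞 (a * x) : ℂ)‖ ^ 4
  have hF_le (K : ℕ) (x : ℝ) : F K x ≤ K ^ 4 := by
    simpa using pow_le_pow_left₀ (norm_nonneg _) (norm_sum_fourierChar_mul_le_card (range K) x) 4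
  have hF_far (K : ℕ) {x : ℝ} (hx : ∀ j : ℤ, δ ≤ |x - j|) : F K x ≤ (1 / (2 * δ)) ^ 4 :=
    pow_le_pow_left₀ (norm_nonneg _) (norm_sum_range_fourierChar_mul_le hδ hx K) 4
  have henergy (K : ℕ) : ((range K).addEnergy (range K) : ℝ) ^ 2 ≤ K ^ 4 * (1 / (2 * δ)) ^ 4 := by
    refine addEnergy_sq_le_of_forall_orbit_le hαβ x₀ y₀ (range K) fun M hM => ?_
    by_cases hα : ∃ j : ℤ, |M * α - x₀ - j| < δ
    · exact mul_le_mul (hF_le _ _) (hF_far K (hfar M hM hα)) (by positivity) (by positivity)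
    · simp only [not_exists, not_lt] at hα
      rw [mul_comm (K ^ 4 : ℝ)]
      exact mul_le_mul (hF_far K hα) (hF_le _ _) (by positivity) (by positivity)
  set K := ⌈1 / δ ^ 2⌉₊ + 1
  have hK : 1 < K * δ ^ 2 := by
    have := Nat.le_ceil (1 / δ ^ 2)
    rw [div_le_iff₀ (by positivity)] at this
    have : (0 : ℝ) < δ ^ 2 := by positivity
    push_cast [K]
    nlinarith
  have hcube : (K : ℝ) ^ 3 ≤ 2 * (range K).addEnergy (range K) := by
    exact_mod_cast pow_three_le_two_mul_addEnergy_range K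
  have : (K : ℝ) ^ 4 * (4 * (K * δ ^ 2) ^ 2) ≤ K ^ 4 * 1 :=
    calc (K : ℝ) ^ 4 * (4 * (K * δ ^ 2) ^ 2) = ((K : ℝ) ^ 3 / 2) ^ 2 * (2 * δ) ^ 4 := by ring
      _ ≤ ((range K).addEnergy (range K) : ℝ) ^ 2 * (2 * δ) ^ 4 := by gcongr; linarith
      _ ≤ K ^ 4 * (1 / (2 * δ)) ^ 4 * (2 * δ) ^ 4 := by gcongr; exact henergy K
      _ = K ^ 4 * 1 := by field_simp
  nlinarith [le_of_mul_le_mul_left this (by positivity)]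

theorem eq_zero_and_eq_zero_of_linearIndependent {α β : ℝ}
    (hli : LinearIndependent ℚ ![(1 : ℝ), α, β]) {A B n : ℤ} (h : A * α + B * β = n) :
    A = 0 ∧ B = 0 := by
  have hrel := Fintype.linearIndependent_iff.1 hli ![-n, A, B] (by
    simp only [Fin.sum_univ_three, Matrix.cons_val, Rat.smul_def]
    push_cast
    linarith)
  exact ⟨by simpa using hrel 1, by simpa using hrel 2⟩

theorem card_filter_Ico_exists_eq_le {θ : ℝ} (hθ : 0 < θ) (f : ℕ → ℤ) (c m : ℕ)
    (hf : ∀ n : ℕ, 0 < n → ⌊(n : ℝ) / θ⌋ ≤ f n + c) :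
    (#{k ∈ Ico 1 (m : ℤ) | ∃ n : ℕ, 0 < n ∧ f n = k} : ℤ) ≤ ⌊(m + c) * θ⌋ := by
  rw [← Int.natCast_floor_eq_floor (by positivity), Nat.cast_le]
  calc #{k ∈ Ico 1 (m : ℤ) | ∃ n : ℕ, 0 < n ∧ f n = k}
      ≤ #((Icc 1 ⌊(m + c) * θ⌋₊).image f) := by
        refine card_le_card fun k hk => ?_
        obtain ⟨hkm, n, hn, rfl⟩ := mem_filter.1 hk
        have hlt : ⌊(n : ℝ) / θ⌋ < m + c := by linarith [hf n hn, (mem_Ico.1 hkm).2]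
        rw [Int.floor_lt, div_lt_iff₀ hθ] at hlt
        push_cast at hlt
        exact mem_image_of_mem f (mem_Icc.2 ⟨hn, Nat.le_floor hlt.le⟩)
    _ ≤ ⌊(m + c) * θ⌋₊ := card_image_le.trans (by simp)

theorem card_le_card_filter_add_card_filter_add_card_filter {ι : Type*} {s : Finset ι}
    {p q r : ι → Prop} (h : ∀ x ∈ s, p x ∨ q x ∨ r x) :
    #s ≤ #{x ∈ s | p x} + #{x ∈ s | q x} + #{x ∈ s | r x} :=
  calc #s ≤ #({x ∈ s | p x} ∪ {x ∈ s | q x} ∪ {x ∈ s | r x}) :=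
        card_le_card fun x hx => by simpa [hx, or_assoc] using h x hx
    _ ≤ _ := (card_union_le _ _).trans (Nat.add_le_add_right (card_union_le _ _) _)

theorem floor_add_floor_add_floor_eq {α β γ : ℝ} (hα : 0 < α) (hβ : 0 < β) (hγ : 0 < γ)
    (hsum : α + β + γ = 1) {M : ℕ} {j k : ℤ} (hj : |M * α - (1 - α / 4) - j| < α / 8)
    (hk : |M * β - (1 - β - α / 2) - k| < α / 8) :
    ⌊M * α⌋ + ⌊(M + 1) * β⌋ + ⌊(M + 1) * γ⌋ = M - 2 := by
  rw [abs_lt] at hj hk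
  have hαfloor : ⌊M * α⌋ = j := by rw [Int.floor_eq_iff]; constructor <;> linarith
  have hβfloor : ⌊(M + 1) * β⌋ = k := by rw [Int.floor_eq_iff]; constructor <;> linarith
  have hγfloor : ⌊(M + 1) * γ⌋ = M - 2 - j - k := by
    have hγeq : (M + 1) * γ = M + 1 - (M * α + α) - (M * β + β) := by
      linear_combination (M + 1 : ℝ) * hsum
    rw [Int.floor_eq_iff, hγeq]
    push_cast
    constructor <;> linarith
  omega

theorem no_small_perturbation_partition_general (α β γ : ℝ)
    (ha : 0 < α) (hb : 0 < β) (hc : 0 < γ) (hsum : α + β + γ = 1)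
    (hli : LinearIndependent ℚ ![(1 : ℝ), α, β]) :
    ¬ ∃ bt ct : ℕ → ℤ,
      (∀ n m : ℕ, 0 < n → n < m → bt n < bt m) ∧
      (∀ n m : ℕ, 0 < n → n < m → ct n < ct m) ∧
      (∀ n : ℕ, 0 < n → |bt n - ⌊(n : ℝ) / β⌋| ≤ 1) ∧
      (∀ n : ℕ, 0 < n → |ct n - ⌊(n : ℝ) / γ⌋| ≤ 1) ∧
      (∀ k : ℤ, 0 < k →
        ((k ∈ beatty α ∧ ¬(∃ n : ℕ, 0 < n ∧ bt n = k) ∧ ¬(∃ n : ℕ, 0 < n ∧ ct n = k)) ∨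
         (k ∉ beatty α ∧ (∃ n : ℕ, 0 < n ∧ bt n = k) ∧ ¬(∃ n : ℕ, 0 < n ∧ ct n = k)) ∨
         (k ∉ beatty α ∧ ¬(∃ n : ℕ, 0 < n ∧ bt n = k) ∧ (∃ n : ℕ, 0 < n ∧ ct n = k)))) := by
  rintro ⟨bt, ct, -, -, hbt, hct, hpart⟩
  obtain ⟨M, -, ⟨j, hj⟩, k, hk⟩ := exists_nat_abs_sub_int_lt_of_no_int_relation
    (fun _ _ _ h => eq_zero_and_eq_zero_of_linearIndependent hli h) (1 - α / 4) (1 - β - α / 2)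
    (by positivity : 0 < α / 8)
  have hfloor := floor_add_floor_add_floor_eq ha hb hc hsum hj hk
  have hA : (#{k ∈ Ico 1 (M : ℤ) | k ∈ beatty α} : ℤ) ≤ ⌊M * α⌋ := by
    convert card_filter_Ico_exists_eq_le ha (fun n => ⌊(n : ℝ) / α⌋) 0 M (fun n _ => by simp)
      using 4 <;> simp [beatty, eq_comm]
  have hB := card_filter_Ico_exists_eq_le hb bt 1 M fun n hn => by
    push_cast; linarith [(abs_le.1 (hbt n hn)).1]
  have hC := card_filter_Ico_exists_eq_le hc ct 1 M fun n hn => by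
    push_cast; linarith [(abs_le.1 (hct n hn)).1]
  have hcover := card_le_card_filter_add_card_filter_add_card_filter (s := Ico 1 (M : ℤ))
    fun k hk => (hpart k (mem_Ico.1 hk).1).imp And.left (Or.imp (·.2.1) (·.2.2))
  rw [Int.card_Ico] at hcover
  push_cast at hB hC
  omega

theorem no_small_perturbation_partition (α β γ : ℝ)
    (hirra : Irrational α) (hirrb : Irrational β) (hirrc : Irrational γ)
    (ha : 0 < α) (hb : 0 < β) (hc : 0 < γ) (hsum : α + β + γ = 1)
    (halpha : 1 / 3 < α)
    (hli : LinearIndependent ℚ ![(1 : ℝ), α, β]) :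
    ¬ ∃ bt ct : ℕ → ℤ,
      (∀ n m : ℕ, 0 < n → n < m → bt n < bt m) ∧
      (∀ n m : ℕ, 0 < n → n < m → ct n < ct m) ∧
      (∀ n : ℕ, 0 < n → |bt n - ⌊(n : ℝ) / β⌋| ≤ 1) ∧
      (∀ n : ℕ, 0 < n → |ct n - ⌊(n : ℝ) / γ⌋| ≤ 1) ∧
      (∀ k : ℤ, 0 < k →
        ((k ∈ beatty α ∧ ¬(∃ n : ℕ, 0 < n ∧ bt n = k) ∧ ¬(∃ n : ℕ, 0 < n ∧ ct n = k)) ∨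
         (k ∉ beatty α ∧ (∃ n : ℕ, 0 < n ∧ bt n = k) ∧ ¬(∃ n : ℕ, 0 < n ∧ ct n = k)) ∨
         (k ∉ beatty α ∧ ¬(∃ n : ℕ, 0 < n ∧ bt n = k) ∧ (∃ n : ℕ, 0 < n ∧ ct n = k)))) :=
  no_small_perturbation_partition_general α β γ ha hb hc hsum hli
end
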